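/- arXiv:1810.12226 — 5 statements merged into one kernel-verified Lean document; each statement's English description precedes it below -/
import Mathlib

section
/- Let G be a finite group acting by algebra automorphisms on a commutative integral domain R over the complex numbers, and let S be a G-stable subalgebra of R such that for every non-identity element g of G there exists s in S with g·s ≠ s. Then the centralizer, in the skew group algebra R⋊G, of the subalgebra generated by S and the group elements G, equals the invariant subalgebra R^G (embedded as R^G·1). -/
/-!
Write `a = ∑ ι (f g) * u g`. Commuting with `ι s` means `f g * (s - g • s) = 0` for every `g`;
as `R` is a domain and `S` separates the elements of `G`, only `f 1` can be nonzero, so `a = ι r`.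
Commuting with `u g` then says `g • r = r`.
-/

namespace SkewGroupAlgebra

variable {R G A F : Type*} [CommRing R] [Monoid G] [Ring A]
  [FunLike F R A] [RingHomClass F R A] (ι : F) (u : G →* Aˣ)

def HasUniqueExpansion : Prop :=
  ∀ a : A, ∃! f : G →₀ R, a = f.sum fun g r => ι r * (u g : A)

variable {ι u}

theorem HasUniqueExpansion.coeff_eq_zero_of_sum_eq_zero (hbasis : HasUniqueExpansion ι u)
    {T : Finset G} {c : G → R} (h : ∑ g ∈ T, ι (c g) * (u g : A) = 0) {g : G} (hg : g ∈ T) :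
    c g = 0 := by
  classical
  set f : G →₀ R := Finsupp.indicator T fun g _ => c g
  have hf : f.sum (fun g r => ι r * (u g : A)) = 0 := by
    rw [Finsupp.sum_of_support_subset f (Finsupp.support_indicator_subset T _) _
      (fun g _ => by rw [map_zero, zero_mul]), ← h]
    exact Finset.sum_congr rfl fun g hg => by rw [Finsupp.indicator_of_mem hg]
  obtain ⟨_, _, huniq⟩ := hbasis 0
  have hf0 : f = 0 := (huniq f hf.symm).trans (huniq 0 (by simp)).symm
  simpa [f, Finsupp.indicator_of_mem hg] using DFunLike.congr_fun hf0 g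

variable [SMul G R] (hcomm : ∀ (g : G) (r : R), (u g : A) * ι r = ι (g • r) * (u g : A))
include hcomm

theorem mul_sum_sub_sum_mul (s : R) (T : Finset G) (c : G → R) :
    ι s * ∑ g ∈ T, ι (c g) * (u g : A) - (∑ g ∈ T, ι (c g) * (u g : A)) * ι s
      = ∑ g ∈ T, ι (s * c g - c g * g • s) * (u g : A) := by
  rw [Finset.mul_sum, Finset.sum_mul, ← Finset.sum_sub_distrib]
  refine Finset.sum_congr rfl fun g _ => ?_
  rw [mul_assoc, hcomm, map_sub, map_mul, map_mul, sub_mul, ← mul_assoc, ← mul_assoc]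

theorem smul_eq_of_commute (hbasis : HasUniqueExpansion ι u) {g : G} {r : R}
    (h : Commute (u g : A) (ι r)) : g • r = r := by
  have hsum : ∑ w ∈ {g}, ι (r - g • r) * (u w : A) = 0 := by
    rw [Finset.sum_singleton, map_sub, sub_mul, ← hcomm, h.eq, sub_self]
  exact (sub_eq_zero.1 <|
    hbasis.coeff_eq_zero_of_sum_eq_zero hsum (Finset.mem_singleton_self g)).symm

theorem smul_eq_of_mem_support_of_commute [IsDomain R] (hbasis : HasUniqueExpansion ι u)
    {f : G →₀ R} {s : R} (h : Commute (ι s) (f.sum fun g r => ι r * (u g : A)))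
    {g : G} (hg : g ∈ f.support) : g • s = s := by
  rw [Finsupp.sum] at h
  have hsum := mul_sum_sub_sum_mul hcomm s f.support f
  rw [h.eq, sub_self, eq_comm] at hsum
  have hcoeff : f g * (s - g • s) = 0 := by
    rw [mul_sub, mul_comm]
    exact hbasis.coeff_eq_zero_of_sum_eq_zero hsum hg
  exact (sub_eq_zero.1 ((mul_eq_zero.1 hcoeff).resolve_left (Finsupp.mem_support_iff.1 hg))).symm

end SkewGroupAlgebra

open SkewGroupAlgebra in
theorem skew_group_algebra_centralizer_eq_invariants_general
    (R : Type*) [CommRing R] [IsDomain R] [Algebra ℂ R]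
    (G : Type*) [Group G]
    [MulSemiringAction G R]
    (A : Type*) [Ring A] [Algebra ℂ A]
    (ι : R →ₐ[ℂ] A) (u : G →* Aˣ)
    (hcomm : ∀ (g : G) (r : R), (u g : A) * ι r = ι (g • r) * (u g : A))
    (hbasis : ∀ a : A, ∃! f : G →₀ R, a = f.sum fun g r => ι r * (u g : A))
    (S : Subalgebra ℂ R)
    (hSsep : ∀ g : G, g ≠ 1 → ∃ s ∈ S, g • s ≠ s) :
    Set.centralizer ((ι '' (S : Set R)) ∪ Set.range fun g : G => (u g : A))
      = ι '' { r : R | ∀ g : G, g • r = r } := by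
  ext a
  simp only [Set.mem_centralizer_iff]
  constructor
  · intro ha
    obtain ⟨f, rfl, -⟩ := hbasis a
    have hsupp : f.support ⊆ {1} := fun g hg => Finset.mem_singleton.2 <| by_contra fun hg1 => by
      obtain ⟨s, hs, hgs⟩ := hSsep g hg1
      exact hgs <|
        smul_eq_of_mem_support_of_commute hcomm hbasis (ha (ι s) (Or.inl ⟨s, hs, rfl⟩)) hg
    have hf : (f.sum fun g r => ι r * (u g : A)) = ι (f 1) := by
      rw [Finsupp.sum_of_support_subset f hsupp _ (by simp), Finset.sum_singleton, map_one u,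
        Units.val_one, mul_one]
    rw [hf] at ha ⊢
    exact ⟨f 1, fun g => smul_eq_of_commute hcomm hbasis (ha _ (Or.inr ⟨g, rfl⟩)), rfl⟩
  · rintro ⟨r, hr, rfl⟩ m (⟨s, -, rfl⟩ | ⟨g, rfl⟩)
    · rw [← map_mul, ← map_mul, mul_comm]
    · rw [hcomm, hr]

/-- Let a finite group `G` act by `ℂ`-algebra automorphisms on a commutative domain `R`, and
let `S` be a `G`-stable subalgebra of `R` separating the elements of `G` (for every `g ≠ 1`
there is `s ∈ S` with `g • s ≠ s`).  Let `A` be the skew group algebra `R ⋊ G`, presented by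
an algebra map `ι : R → A`, a group of units `u : G → Aˣ` satisfying the skew commutation
relation, such that every element of `A` is uniquely a finite sum `∑_w ι(f_w) · u_w`.  Then
the centralizer in `A` of the subalgebra generated by `ι(S)` and the group elements `u(G)`
is exactly `ι(R^G)`. -/
theorem skew_group_algebra_centralizer_eq_invariants
    (R : Type*) [CommRing R] [IsDomain R] [Algebra ℂ R]
    (G : Type*) [Group G] [Finite G]
    [MulSemiringAction G R] [SMulCommClass G ℂ R]
    (A : Type*) [Ring A] [Algebra ℂ A]
    (ι : R →ₐ[ℂ] A) (u : G →* Aˣ)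
    (hcomm : ∀ (g : G) (r : R), (u g : A) * ι r = ι (g • r) * (u g : A))
    (hbasis : ∀ a : A, ∃! f : G →₀ R, a = f.sum fun g r => ι r * (u g : A))
    (S : Subalgebra ℂ R)
    (hSstable : ∀ g : G, ∀ s ∈ S, g • s ∈ S)
    (hSsep : ∀ g : G, g ≠ 1 → ∃ s ∈ S, g • s ≠ s) :
    Set.centralizer ((ι '' (S : Set R)) ∪ Set.range fun g : G => (u g : A))
      = ι '' { r : R | ∀ g : G, g • r = r } :=
  skew_group_algebra_centralizer_eq_invariants_general R G A ι u hcomm hbasis S hSsep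
end

section
/- For n ≥ 1, the algebra of diagonal invariants C[x_1,…,x_n,y_1,…,y_n]^{S_n} (for the action of S_n permuting the x_i and y_i simultaneously) is generated as a C-algebra by the multisymmetric power sums p_{a,b} = x_1^a y_1^b + … + x_n^a y_n^b with a, b ≥ 0 and a + b ≤ n. -/
/-!
Averaging over `S_n`, possible in characteristic zero, writes an invariant as a combination of
orbit sums of monomials `∏ i, x_i ^ (a_i) * y_i ^ (b_i)`. If `g` is obtained from the exponent
pattern `f` by zeroing the pair at `i`, then `p_{f i} * (orbit sum of g)` is a positive multiple
of the orbit sum of `f` plus orbit sums of patterns with as few nonzero pairs as `g`, so induction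
on the number of nonzero pairs puts every orbit sum in the algebra generated by all `p_{a,b}`.

To cut down to `a + b ≤ n`: by Newton's identities and the fundamental theorem of symmetric
polynomials, each `p_{a,0}` is a polynomial in the `p_{j,0}` with `j ≤ n`; and the polarization
derivation `∑ i, y_i ∂/∂x_i` preserves the algebra generated by the `p_{a,b}` with `a + b ≤ n`
while sending `p_{a+1,b}` to `(a + 1) p_{a,b+1}`.
-/

open MvPolynomial Finset

theorem Derivation.map_mem_adjoin {R A : Type*} [CommSemiring R] [CommSemiring A] [Algebra R A]
    (D : Derivation R A A) {s : Set A} (hs : ∀ x ∈ s, D x ∈ Algebra.adjoin R s) {x : A}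
    (hx : x ∈ Algebra.adjoin R s) : D x ∈ Algebra.adjoin R s := by
  induction hx using Algebra.adjoin_induction with
  | mem x hx => exact hs x hx
  | algebraMap r => simp
  | add x y _ _ hx hy => rw [map_add]; exact add_mem hx hy
  | mul x y hx' hy' hx hy =>
    rw [Derivation.leibniz, smul_eq_mul, smul_eq_mul]
    exact add_mem (mul_mem hx' hy) (mul_mem hy' hx)

theorem Subalgebra.smul_mem_iff {K A : Type*} [Field K] [Semiring A] [Algebra K A]
    (S : Subalgebra K A) {c : K} (hc : c ≠ 0) {x : A} : c • x ∈ S ↔ x ∈ S :=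
  Submodule.smul_mem_iff (Subalgebra.toSubmodule S) hc

namespace Pi

variable {ι M : Type*} [DecidableEq ι]

theorem add_single_eq_comp_swap [AddZeroClass M] {g : ι → M} {i j : ι} (hi : g i = 0)
    (hj : g j = 0) (e : M) : g + single j e = (g + single i e) ∘ Equiv.swap i j := by
  ext k
  rcases eq_or_ne k j with rfl | hkj
  · simp [hj, hi]
  rcases eq_or_ne k i with rfl | hki
  · simp [hi, hj, hkj]
  simp [Equiv.swap_apply_of_ne_of_ne hki hkj, hkj, hki]

theorem update_zero_add_single [AddZeroClass M] (f : ι → M) (i : ι) :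
    Function.update f i 0 + single i (f i) = f := by
  ext j
  rcases eq_or_ne j i with rfl | hji
  · simp
  · simp [hji]

variable [Fintype ι] [DecidableEq M]

theorem card_filter_update_zero_lt [Zero M] {f : ι → M} {i : ι} (hi : f i ≠ 0) :
    #{j | Function.update f i 0 j ≠ 0} < #{j | f j ≠ 0} := by
  refine card_lt_card ⟨monotone_filter_right _ fun j _ hj ↦ ?_, fun h ↦ ?_⟩
  · rcases eq_or_ne j i with rfl | hji
    · simp at hj
    · simpa [hji] using hj
  · simpa using h (mem_filter.mpr ⟨mem_univ i, hi⟩)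

theorem card_filter_add_single_ne_zero_le [AddZeroClass M] {g : ι → M} {j : ι} (hj : g j ≠ 0)
    (e : M) : #{k | (g + single j e : ι → M) k ≠ 0} ≤ #{k | g k ≠ 0} := by
  refine card_le_card (monotone_filter_right _ fun k _ hk ↦ ?_)
  rcases eq_or_ne k j with rfl | hkj
  · exact hj
  · simpa [hkj] using hk

end Pi

namespace MvPolynomial

section Newton

variable (σ K : Type*) [Fintype σ] [Field K] [CharZero K]

theorem esymm_mem_adjoin_psum (k : ℕ) :
    esymm σ K k ∈ Algebra.adjoin K (psum σ K '' Set.Iic k) := by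
  induction k using Nat.strong_induction_on with
  | _ k ih =>
  rcases k.eq_zero_or_pos with rfl | hk
  · simp
  refine (Subalgebra.smul_mem_iff _ (Nat.cast_ne_zero.mpr hk.ne')).mp ?_
  rw [Algebra.smul_def, map_natCast, mul_esymm_eq_sum]
  refine mul_mem (pow_mem (neg_mem (one_mem _)) _) (Subalgebra.sum_mem _ fun a ha ↦ ?_)
  rw [mem_filter, HasAntidiagonal.mem_antidiagonal] at ha
  refine mul_mem (mul_mem (pow_mem (neg_mem (one_mem _)) _) ?_) ?_
  · exact Algebra.adjoin_mono (Set.image_mono (Set.Iic_subset_Iic.mpr ha.2.le)) (ih a.1 ha.2)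
  · exact Algebra.subset_adjoin ⟨a.2, Set.mem_Iic.mpr (by omega), rfl⟩

theorem psum_mem_adjoin_psum_Iic_card (k : ℕ) :
    psum σ K k ∈ Algebra.adjoin K (psum σ K '' Set.Iic (Fintype.card σ)) := by
  set e : Fin (Fintype.card σ) → MvPolynomial σ K := fun i ↦ esymm σ K (i + 1)
  obtain ⟨q, hq⟩ := esymmAlgHom_surjective K le_rfl ⟨psum σ K k, psum_isSymmetric σ K k⟩
  have hpsum : psum σ K k ∈ Algebra.adjoin K (Set.range e) := by
    rw [Algebra.adjoin_range_eq_range_aeval]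
    exact ⟨q, (esymmAlgHom_apply q).symm.trans (congrArg Subtype.val hq)⟩
  refine Algebra.adjoin_le ?_ hpsum
  rintro _ ⟨i, rfl⟩
  exact Algebra.adjoin_mono (Set.image_mono (Set.Iic_subset_Iic.mpr i.2))
    (esymm_mem_adjoin_psum σ K _)

end Newton

section CommSemiring

/-- The multisymmetric power sum `p_{a,b}`; the variable `(i, false)` is `x_i` and `(i, true)`
is `y_i`. -/
noncomputable def multiPsum (ι R : Type*) [Fintype ι] [CommSemiring R] (a b : ℕ) :
    MvPolynomial (ι × Bool) R :=
  ∑ i, X (i, false) ^ a * X (i, true) ^ b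

def boundedMultiPsums (ι R : Type*) [Fintype ι] [CommSemiring R] :
    Set (MvPolynomial (ι × Bool) R) :=
  {q | ∃ a b, a + b ≤ Fintype.card ι ∧ q = multiPsum ι R a b}

noncomputable def polarization (ι R : Type*) [CommSemiring R] :
    Derivation R (MvPolynomial (ι × Bool) R) (MvPolynomial (ι × Bool) R) :=
  mkDerivation R fun q ↦ if q.2 then 0 else X (q.1, true)

noncomputable def diagRename {ι : Type*} (R : Type*) [CommSemiring R] (σ : Equiv.Perm ι) :
    MvPolynomial (ι × Bool) R →ₐ[R] MvPolynomial (ι × Bool) R :=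
  rename (Prod.map σ id)

noncomputable def diagSymmetrize (ι R : Type*) [Fintype ι] [DecidableEq ι] [CommSemiring R] :
    MvPolynomial (ι × Bool) R →ₗ[R] MvPolynomial (ι × Bool) R :=
  ∑ σ : Equiv.Perm ι, (diagRename R σ).toLinearMap

noncomputable def diagMonomial {ι : Type*} (R : Type*) [Fintype ι] [CommSemiring R]
    (f : ι → ℕ × ℕ) : MvPolynomial (ι × Bool) R :=
  ∏ i, X (i, false) ^ (f i).1 * X (i, true) ^ (f i).2

variable {ι R : Type*} [CommSemiring R]

theorem polarization_X_false (i : ι) : polarization ι R (X (i, false)) = X (i, true) := by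
  simp [polarization, mkDerivation_X]

theorem polarization_X_true (i : ι) : polarization ι R (X (i, true)) = 0 := by
  simp [polarization, mkDerivation_X]

theorem diagRename_diagRename (σ τ : Equiv.Perm ι) (p : MvPolynomial (ι × Bool) R) :
    diagRename R σ (diagRename R τ p) = diagRename R (σ * τ) p := by
  simp only [diagRename, rename_rename, Prod.map_comp_map, Function.comp_id]
  rfl

variable [Fintype ι]

theorem rename_psum_eq_multiPsum (k : ℕ) :
    rename (fun i ↦ (i, false)) (psum ι R k) = multiPsum ι R k 0 := by
  simp [psum, multiPsum]

theorem polarization_multiPsum (a b : ℕ) :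
    polarization ι R (multiPsum ι R a b) = a • multiPsum ι R (a - 1) (b + 1) := by
  simp only [multiPsum, map_sum, Derivation.leibniz, Derivation.leibniz_pow, polarization_X_false,
    polarization_X_true, smul_sum]
  refine sum_congr rfl fun i _ ↦ ?_
  rcases a with _ | a
  · simp
  · simp only [add_tsub_cancel_right, smul_eq_mul, nsmul_eq_mul]
    ring

theorem polarization_mem_adjoin_boundedMultiPsums {p : MvPolynomial (ι × Bool) R}
    (hp : p ∈ Algebra.adjoin R (boundedMultiPsums ι R)) :
    polarization ι R p ∈ Algebra.adjoin R (boundedMultiPsums ι R) := by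
  refine Derivation.map_mem_adjoin _ ?_ hp
  rintro _ ⟨a, b, hab, rfl⟩
  rw [polarization_multiPsum]
  rcases a with _ | a
  · simp
  · refine nsmul_mem (Algebra.subset_adjoin ?_) _
    exact ⟨a, b + 1, by omega, rfl⟩

theorem diagRename_multiPsum (σ : Equiv.Perm ι) (a b : ℕ) :
    diagRename R σ (multiPsum ι R a b) = multiPsum ι R a b := by
  simp only [diagRename, multiPsum, map_sum, map_mul, map_pow, rename_X]
  exact Fintype.sum_equiv σ _ _ fun _ ↦ rfl

theorem diagRename_eq_of_mem_adjoin_boundedMultiPsums {p : MvPolynomial (ι × Bool) R}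
    (hp : p ∈ Algebra.adjoin R (boundedMultiPsums ι R)) (σ : Equiv.Perm ι) :
    diagRename R σ p = p := by
  suffices Algebra.adjoin R (boundedMultiPsums ι R) ≤
      AlgHom.equalizer (diagRename R σ) (AlgHom.id R _) from this hp
  refine Algebra.adjoin_le ?_
  rintro _ ⟨a, b, -, rfl⟩
  exact diagRename_multiPsum σ a b

@[simp]
theorem diagMonomial_zero : diagMonomial R (0 : ι → ℕ × ℕ) = 1 := by
  simp [diagMonomial]

theorem diagMonomial_add (f g : ι → ℕ × ℕ) :
    diagMonomial R (f + g) = diagMonomial R f * diagMonomial R g := by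
  simp only [diagMonomial, ← prod_mul_distrib, Pi.add_apply, Prod.fst_add, Prod.snd_add, pow_add]
  exact prod_congr rfl fun _ _ ↦ by ring

theorem monomial_eq_smul_diagMonomial (d : ι × Bool →₀ ℕ) (c : R) :
    monomial d c = c • diagMonomial R fun i ↦ (d (i, false), d (i, true)) := by
  rw [monomial_eq, Finsupp.prod_pow, Fintype.prod_prod_type, smul_eq_C_mul, diagMonomial]
  congr 1
  exact prod_congr rfl fun i _ ↦ by rw [Fintype.prod_bool, mul_comm]

theorem diagRename_diagMonomial (σ : Equiv.Perm ι) (f : ι → ℕ × ℕ) :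
    diagRename R σ (diagMonomial R f) = diagMonomial R (f ∘ σ.symm) := by
  simp only [diagRename, diagMonomial, map_prod, map_mul, map_pow, rename_X]
  exact Fintype.prod_equiv σ _ _ fun _ ↦ by simp

variable [DecidableEq ι]

theorem diagMonomial_single (i : ι) (a b : ℕ) :
    diagMonomial R (Pi.single i (a, b)) = X (i, false) ^ a * X (i, true) ^ b := by
  rw [diagMonomial, prod_eq_single i (fun j _ hj ↦ by simp [hj]) (by simp)]
  simp

theorem multiPsum_mul_diagMonomial (a b : ℕ) (f : ι → ℕ × ℕ) :
    multiPsum ι R a b * diagMonomial R f =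
      ∑ i, diagMonomial R (f + (Pi.single i (a, b) : ι → ℕ × ℕ)) := by
  simp only [multiPsum, sum_mul, diagMonomial_add, diagMonomial_single, mul_comm (diagMonomial R f)]

theorem diagSymmetrize_apply (p : MvPolynomial (ι × Bool) R) :
    diagSymmetrize ι R p = ∑ σ, diagRename R σ p := by
  simp [diagSymmetrize]

theorem diagSymmetrize_diagRename (τ : Equiv.Perm ι) (p : MvPolynomial (ι × Bool) R) :
    diagSymmetrize ι R (diagRename R τ p) = diagSymmetrize ι R p := by
  simp only [diagSymmetrize_apply, diagRename_diagRename]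
  exact Fintype.sum_equiv (Equiv.mulRight τ) _ _ fun _ ↦ rfl

theorem diagSymmetrize_of_forall_diagRename_eq {p : MvPolynomial (ι × Bool) R}
    (hp : ∀ σ, diagRename R σ p = p) :
    diagSymmetrize ι R p = Fintype.card (Equiv.Perm ι) • p := by
  simp [diagSymmetrize_apply, hp]

theorem diagSymmetrize_mul_of_forall_diagRename_eq {p : MvPolynomial (ι × Bool) R}
    (hp : ∀ σ, diagRename R σ p = p) (q : MvPolynomial (ι × Bool) R) :
    diagSymmetrize ι R (p * q) = p * diagSymmetrize ι R q := by
  simp [diagSymmetrize_apply, hp, mul_sum]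

theorem diagSymmetrize_diagMonomial_comp (f : ι → ℕ × ℕ) (τ : Equiv.Perm ι) :
    diagSymmetrize ι R (diagMonomial R (f ∘ τ)) = diagSymmetrize ι R (diagMonomial R f) := by
  rw [← diagSymmetrize_diagRename τ, diagRename_diagMonomial, Function.comp_assoc,
    Equiv.self_comp_symm, Function.comp_id]

theorem multiPsum_mul_diagSymmetrize_diagMonomial {g : ι → ℕ × ℕ} {i : ι} (hi : g i = 0)
    (a b : ℕ) :
    multiPsum ι R a b * diagSymmetrize ι R (diagMonomial R g) =
      #{j | g j = 0} • diagSymmetrize ι R (diagMonomial R (g + Pi.single i (a, b))) +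
        ∑ j with g j ≠ 0, diagSymmetrize ι R (diagMonomial R (g + Pi.single j (a, b))) := by
  rw [← diagSymmetrize_mul_of_forall_diagRename_eq (diagRename_multiPsum · a b),
    multiPsum_mul_diagMonomial, map_sum, ← sum_filter_add_sum_filter_not univ (g · = 0),
    ← sum_const]
  congr 1
  refine sum_congr rfl fun j hj ↦ ?_
  rw [Pi.add_single_eq_comp_swap hi (mem_filter.mp hj).2, diagSymmetrize_diagMonomial_comp]

end CommSemiring

section Field

variable {ι K : Type*} [Fintype ι] [Field K] [CharZero K]

theorem multiPsum_zero_right_mem_adjoin_boundedMultiPsums (a : ℕ) :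
    multiPsum ι K a 0 ∈ Algebra.adjoin K (boundedMultiPsums ι K) := by
  rw [← rename_psum_eq_multiPsum]
  refine Algebra.adjoin_le (S := (Algebra.adjoin K _).comap (rename _)) ?_
    (psum_mem_adjoin_psum_Iic_card ι K a)
  rintro _ ⟨j, hj, rfl⟩
  exact Algebra.subset_adjoin ⟨j, 0, hj, rename_psum_eq_multiPsum j⟩

theorem multiPsum_mem_adjoin_boundedMultiPsums (a b : ℕ) :
    multiPsum ι K a b ∈ Algebra.adjoin K (boundedMultiPsums ι K) := by
  induction b generalizing a with
  | zero => exact multiPsum_zero_right_mem_adjoin_boundedMultiPsums a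
  | succ b ih =>
    have h := polarization_mem_adjoin_boundedMultiPsums (ih (a + 1))
    rw [polarization_multiPsum, Nat.add_sub_cancel, ← Nat.cast_smul_eq_nsmul K] at h
    exact (Subalgebra.smul_mem_iff _ (Nat.cast_ne_zero.mpr a.succ_ne_zero)).mp h

variable [DecidableEq ι]

theorem diagSymmetrize_diagMonomial_mem_adjoin_multiPsum (f : ι → ℕ × ℕ) :
    diagSymmetrize ι K (diagMonomial K f) ∈
      Algebra.adjoin K (Set.range (Function.uncurry (multiPsum ι K))) := by
  induction hk : #{i | f i ≠ 0} using Nat.strong_induction_on generalizing f with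
  | _ k ih =>
  subst hk
  obtain rfl | ⟨i, hi⟩ := eq_or_ne f 0 |>.imp id Function.ne_iff.mp
  · rw [diagMonomial_zero, diagSymmetrize_of_forall_diagRename_eq fun σ ↦ map_one _]
    exact nsmul_mem (one_mem _) _
  set g := Function.update f i 0
  have hgi : g i = 0 := Function.update_self i 0 f
  have hg_lt : #{j | g j ≠ 0} < #{j | f j ≠ 0} := Pi.card_filter_update_zero_lt hi
  have hzero_pos : 0 < #{j | g j = 0} := card_pos.mpr ⟨i, mem_filter.mpr ⟨mem_univ i, hgi⟩⟩
  have key := multiPsum_mul_diagSymmetrize_diagMonomial hgi (R := K) (f i).1 (f i).2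
  rw [Prod.mk.eta, Pi.update_zero_add_single, ← Nat.cast_smul_eq_nsmul K] at key
  refine (Subalgebra.smul_mem_iff _ (Nat.cast_ne_zero.mpr hzero_pos.ne')).mp ?_
  rw [eq_sub_of_add_eq key.symm]
  refine sub_mem (mul_mem (Algebra.subset_adjoin ⟨f i, rfl⟩) (ih _ hg_lt g rfl))
    (Subalgebra.sum_mem _ fun j hj ↦ ih _ ?_ _ rfl)
  exact (Pi.card_filter_add_single_ne_zero_le (mem_filter.mp hj).2 _).trans_lt hg_lt

theorem diagSymmetrize_mem_adjoin_multiPsum (p : MvPolynomial (ι × Bool) K) :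
    diagSymmetrize ι K p ∈ Algebra.adjoin K (Set.range (Function.uncurry (multiPsum ι K))) := by
  induction p using MvPolynomial.induction_on' with
  | monomial d c =>
    rw [monomial_eq_smul_diagMonomial, map_smul]
    exact Subalgebra.smul_mem _ (diagSymmetrize_diagMonomial_mem_adjoin_multiPsum _) c
  | add p q hp hq => rw [map_add]; exact add_mem hp hq

theorem mem_adjoin_boundedMultiPsums_of_forall_diagRename_eq {p : MvPolynomial (ι × Bool) K}
    (hp : ∀ σ, diagRename K σ p = p) : p ∈ Algebra.adjoin K (boundedMultiPsums ι K) := by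
  have hsymm : diagSymmetrize ι K p ∈ Algebra.adjoin K (boundedMultiPsums ι K) := by
    refine Algebra.adjoin_le ?_ (diagSymmetrize_mem_adjoin_multiPsum p)
    rintro _ ⟨⟨a, b⟩, rfl⟩
    exact multiPsum_mem_adjoin_boundedMultiPsums a b
  rw [diagSymmetrize_of_forall_diagRename_eq hp, ← Nat.cast_smul_eq_nsmul K] at hsymm
  exact (Subalgebra.smul_mem_iff _ (Nat.cast_ne_zero.mpr Fintype.card_ne_zero)).mp hsymm

end Field

end MvPolynomial

theorem diagonal_invariants_generated_by_multisymmetric_power_sums_general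
    (n : ℕ) (p : MvPolynomial (Fin n × Bool) ℂ) :
    (∀ σ : Equiv.Perm (Fin n),
        rename (fun q : Fin n × Bool => (σ q.1, q.2)) p = p) ↔
      p ∈ Algebra.adjoin ℂ
        { q : MvPolynomial (Fin n × Bool) ℂ |
          ∃ a b : ℕ, a + b ≤ n ∧
            q = ∑ i : Fin n, X (i, false) ^ a * X (i, true) ^ b } := by
  have hgens : boundedMultiPsums (Fin n) ℂ =
      {q | ∃ a b : ℕ, a + b ≤ n ∧ q = ∑ i : Fin n, X (i, false) ^ a * X (i, true) ^ b} := by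
    rw [boundedMultiPsums, Fintype.card_fin]
    rfl
  rw [← hgens]
  exact ⟨mem_adjoin_boundedMultiPsums_of_forall_diagRename_eq,
    diagRename_eq_of_mem_adjoin_boundedMultiPsums⟩

/-- The algebra of diagonal invariants `ℂ[x_1,…,x_n,y_1,…,y_n]^{S_n}` is generated by the
multisymmetric power sums `p_{a,b} = ∑_i x_i^a y_i^b` with `a + b ≤ n`.  The variables are
indexed by `Fin n × Bool`, with `(i, false)` playing the role of `x_i` and `(i, true)` of
`y_i`, and `S_n` acts by permuting the `x_i` and `y_i` simultaneously. -/
theorem diagonal_invariants_generated_by_multisymmetric_power_sums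
    (n : ℕ) (hn : 1 ≤ n) (p : MvPolynomial (Fin n × Bool) ℂ) :
    (∀ σ : Equiv.Perm (Fin n),
        rename (fun q : Fin n × Bool => (σ q.1, q.2)) p = p) ↔
      p ∈ Algebra.adjoin ℂ
        { q : MvPolynomial (Fin n × Bool) ℂ |
          ∃ a b : ℕ, a + b ≤ n ∧
            q = ∑ i : Fin n, X (i, false) ^ a * X (i, true) ^ b } :=
  diagonal_invariants_generated_by_multisymmetric_power_sums_general n p
end

section
/- Let g = gl_n(C), let μ = (μ_1,…,μ_l) be a composition of n, let l_μ = gl_{μ_1} × … × gl_{μ_l} ⊆ g be the corresponding standard Levi subalgebra, and let z_μ be the center of l_μ. Inside the Lie algebra l̂_μ^+ = l_μ ⊕ (g ⊗ t C[t]) ⊕ C·1 (with 1 central and bracket [X⊗t^a, Y⊗t^b] = [X,Y]⊗t^{a+b}), the subspace j_μ = (n_- ⊗ t) ⊕ (n_+ ⊗ t) ⊕ (([l_μ,l_μ] ∩ t) ⊗ t) ⊕ (g ⊗ t^2 C[t]) is a Lie ideal, and the quotient l̂_μ^+ / j_μ is isomorphic as a Lie algebra to l_μ ⊕ (z_μ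 ⊗ t) ⊕ C·1, where z_μ ⊗ t is central in the quotient. -/
open TensorProduct Polynomial

section

attribute [local instance] LieRing.ofAssociativeRing

noncomputable def btrL {n l : ℕ} (blk : Fin n → Fin l) :
    Matrix (Fin n) (Fin n) ℂ →ₗ[ℂ] (Fin l → ℂ) where
  toFun X i := ∑ j ∈ Finset.univ.filter (fun j => blk j = i), X j j
  map_add' X Y := by funext i; simp [Matrix.add_apply, Finset.sum_add_distrib]
  map_smul' c X := by funext i; simp [Matrix.smul_apply, Finset.mul_sum]

theorem Lset_mul {n l : ℕ} (blk : Fin n → Fin l) (X Y : Matrix (Fin n) (Fin n) ℂ)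
    (hX : ∀ i j, blk i ≠ blk j → X i j = 0) (hY : ∀ i j, blk i ≠ blk j → Y i j = 0) :
    ∀ i j, blk i ≠ blk j → (X * Y) i j = 0 := by
  intro i j hij
  rw [Matrix.mul_apply]
  refine Finset.sum_eq_zero fun k _ => ?_
  by_cases h : blk i = blk k
  · rw [hY k j (h ▸ hij), mul_zero]
  · rw [hX i k h, zero_mul]

theorem Lset_lie {n l : ℕ} (blk : Fin n → Fin l) (X Y : Matrix (Fin n) (Fin n) ℂ)
    (hX : ∀ i j, blk i ≠ blk j → X i j = 0) (hY : ∀ i j, blk i ≠ blk j → Y i j = 0) :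
    ∀ i j, blk i ≠ blk j → (⁅X, Y⁆ : Matrix (Fin n) (Fin n) ℂ) i j = 0 := by
  intro i j hij
  rw [Ring.lie_def]
  have h1 := Lset_mul blk X Y hX hY i j hij
  have h2 := Lset_mul blk Y X hY hX i j hij
  simp [Matrix.sub_apply, h1, h2]

theorem btr_lie {n l : ℕ} (blk : Fin n → Fin l) (X Y : Matrix (Fin n) (Fin n) ℂ)
    (hX : ∀ i j, blk i ≠ blk j → X i j = 0) :
    btrL blk ⁅X, Y⁆ = 0 := by
  funext i
  show ∑ j ∈ Finset.univ.filter (fun j => blk j = i), (⁅X, Y⁆ : Matrix (Fin n) (Fin n) ℂ) j j = 0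
  have key : ∀ j ∈ Finset.univ.filter (fun j : Fin n => blk j = i),
      (X * Y) j j = ∑ k ∈ Finset.univ.filter (fun k : Fin n => blk k = i), X j k * Y k j := by
    intro j hj
    rw [Finset.mem_filter] at hj
    rw [Matrix.mul_apply]
    symm
    refine Finset.sum_subset (Finset.filter_subset _ _) fun k _ hk => ?_
    rw [Finset.mem_filter] at hk
    push_neg at hk
    have : blk j ≠ blk k := by rw [hj.2]; exact fun h => (hk (Finset.mem_univ k)) h.symm
    rw [hX j k this, zero_mul]
  have key2 : ∀ j ∈ Finset.univ.filter (fun j : Fin n => blk j = i),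
      (Y * X) j j = ∑ k ∈ Finset.univ.filter (fun k : Fin n => blk k = i), Y j k * X k j := by
    intro j hj
    rw [Finset.mem_filter] at hj
    rw [Matrix.mul_apply]
    symm
    refine Finset.sum_subset (Finset.filter_subset _ _) fun k _ hk => ?_
    rw [Finset.mem_filter] at hk
    push_neg at hk
    have : blk k ≠ blk j := fun h => (hk (Finset.mem_univ k)) (h.trans hj.2)
    rw [hX k j this, mul_zero]
  have : ∀ j, (⁅X, Y⁆ : Matrix (Fin n) (Fin n) ℂ) j j = (X * Y) j j - (Y * X) j j := by
    intro j; rw [Ring.lie_def]; simp [Matrix.sub_apply]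
  simp only [this]
  rw [Finset.sum_sub_distrib, Finset.sum_congr rfl key, Finset.sum_congr rfl key2]
  rw [Finset.sum_comm]
  simp [mul_comm]

theorem diag_mem_commSpan {n l : ℕ} (blk : Fin n → Fin l) (rep : Fin l → Fin n)
    (hrep : ∀ i, blk (rep i) = i) (Z : Matrix (Fin n) (Fin n) ℂ)
    (hdiag : ∀ i j, i ≠ j → Z i j = 0) (htr : btrL blk Z = 0) :
    Z ∈ Submodule.span ℂ { z : Matrix (Fin n) (Fin n) ℂ |
      ∃ X ∈ { X : Matrix (Fin n) (Fin n) ℂ | ∀ i j, blk i ≠ blk j → X i j = 0 },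
      ∃ Y ∈ { X : Matrix (Fin n) (Fin n) ℂ | ∀ i j, blk i ≠ blk j → X i j = 0 },
      z = ⁅X, Y⁆ } := by
  have e1 : ∑ j, Z j j • Matrix.single j j (1:ℂ) = Z := by
    ext a b
    rw [Matrix.sum_apply]
    by_cases hab : a = b
    · subst hab
      rw [Finset.sum_eq_single a (fun j _ hj => by
        simp [Matrix.single, Matrix.smul_apply, hj]) (by simp)]
      simp [Matrix.single, Matrix.smul_apply]
    · rw [hdiag a b hab]
      refine Finset.sum_eq_zero fun j _ => ?_
      simp only [Matrix.smul_apply, Matrix.single, Matrix.of_apply, smul_eq_mul]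
      rw [if_neg (fun h => hab (h.1.symm.trans h.2))]
      rw [mul_zero]
  have e2 : ∑ j, Z j j • Matrix.single (rep (blk j)) (rep (blk j)) (1:ℂ) = 0 := by
    rw [← Finset.sum_fiberwise Finset.univ blk
      (fun j => Z j j • Matrix.single (rep (blk j)) (rep (blk j)) (1:ℂ))]
    refine Finset.sum_eq_zero fun i _ => ?_
    have : ∀ j ∈ Finset.univ.filter (fun j : Fin n => blk j = i),
        Z j j • Matrix.single (rep (blk j)) (rep (blk j)) (1:ℂ)
          = Z j j • Matrix.single (rep i) (rep i) (1:ℂ) := by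
      intro j hj
      rw [Finset.mem_filter] at hj
      rw [hj.2]
    rw [Finset.sum_congr rfl this, ← Finset.sum_smul]
    have : ∑ j ∈ Finset.univ.filter (fun j : Fin n => blk j = i), Z j j = 0 := by
      have := congrFun htr i
      simpa [btrL] using this
    rw [this, zero_smul]
  have e3 : Z = ∑ j, Z j j • (Matrix.single j j (1:ℂ)
      - Matrix.single (rep (blk j)) (rep (blk j)) (1:ℂ)) := by
    simp only [smul_sub, Finset.sum_sub_distrib, e1, e2, sub_zero]
  rw [e3]
  refine Submodule.sum_mem _ fun j _ => Submodule.smul_mem _ _ (Submodule.subset_span ?_)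
  refine ⟨Matrix.single j (rep (blk j)) 1, ?_,
    Matrix.single (rep (blk j)) j 1, ?_, ?_⟩
  · intro a b hab
    simp only [Matrix.single, Matrix.of_apply]
    rw [if_neg]
    rintro ⟨rfl, rfl⟩
    exact hab (by rw [hrep])
  · intro a b hab
    simp only [Matrix.single, Matrix.of_apply]
    rw [if_neg]
    rintro ⟨rfl, rfl⟩
    exact hab (by rw [hrep])
  · rw [Ring.lie_def, Matrix.single_mul_single_same, Matrix.single_mul_single_same, mul_one]

noncomputable def phiAux {n l : ℕ} (blk : Fin n → Fin l) :
    Polynomial ℂ →ₗ[ℂ] (Matrix (Fin n) (Fin n) ℂ × ℂ) →ₗ[ℂ]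
      Matrix (Fin n) (Fin n) ℂ × ((Fin l → ℂ) × ℂ) :=
  LinearMap.mk₂ ℂ
    (fun p v => (p.coeff 0 • v.1, (p.coeff 1 • btrL blk v.1, p.coeff 0 * v.2)))
    (fun p q v => by
      simp [Prod.ext_iff, add_smul, add_mul])
    (fun c p v => by
      simp [Prod.ext_iff, Polynomial.coeff_smul, smul_eq_mul, mul_smul, mul_assoc])
    (fun p u v => by
      simp [Prod.ext_iff, smul_add, mul_add])
    (fun c p v => by
      simp [Prod.ext_iff, smul_comm c, mul_left_comm])

noncomputable def phiL {n l : ℕ} (blk : Fin n → Fin l) :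
    Polynomial ℂ ⊗[ℂ] (Matrix (Fin n) (Fin n) ℂ × ℂ) →ₗ[ℂ]
      Matrix (Fin n) (Fin n) ℂ × ((Fin l → ℂ) × ℂ) :=
  TensorProduct.lift (phiAux blk)

theorem phiL_tmul {n l : ℕ} (blk : Fin n → Fin l) (p : Polynomial ℂ)
    (v : Matrix (Fin n) (Fin n) ℂ × ℂ) :
    phiL blk (p ⊗ₜ[ℂ] v) = (p.coeff 0 • v.1, (p.coeff 1 • btrL blk v.1, p.coeff 0 * v.2)) := rfl

noncomputable def diagComb {n l : ℕ} (D : Fin l → Matrix (Fin n) (Fin n) ℂ) :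
    (Fin l → ℂ) →ₗ[ℂ] Matrix (Fin n) (Fin n) ℂ where
  toFun v := ∑ i, v i • D i
  map_add' u v := by simp [add_smul, Finset.sum_add_distrib]
  map_smul' c v := by simp [mul_smul, Finset.smul_sum]

noncomputable def psiL {n l : ℕ} (D : Fin l → Matrix (Fin n) (Fin n) ℂ) :
    (Matrix (Fin n) (Fin n) ℂ × ((Fin l → ℂ) × ℂ)) →ₗ[ℂ]
      Polynomial ℂ ⊗[ℂ] (Matrix (Fin n) (Fin n) ℂ × ℂ) :=
  ((TensorProduct.mk ℂ (Polynomial ℂ) (Matrix (Fin n) (Fin n) ℂ × ℂ) 1) ∘ₗ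
      (LinearMap.inl ℂ _ ℂ)) ∘ₗ (LinearMap.fst ℂ _ _)
  + (((TensorProduct.mk ℂ (Polynomial ℂ) (Matrix (Fin n) (Fin n) ℂ × ℂ) Polynomial.X) ∘ₗ
      (LinearMap.inl ℂ _ ℂ)) ∘ₗ (diagComb D)) ∘ₗ ((LinearMap.fst ℂ _ ℂ) ∘ₗ (LinearMap.snd ℂ _ _))
  + (LinearMap.toSpanSingleton ℂ _
      ((1 : Polynomial ℂ) ⊗ₜ[ℂ] (((0 : Matrix (Fin n) (Fin n) ℂ), (1 : ℂ))))) ∘ₗ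
      ((LinearMap.snd ℂ _ ℂ) ∘ₗ (LinearMap.snd ℂ _ _))

theorem psiL_apply {n l : ℕ} (D : Fin l → Matrix (Fin n) (Fin n) ℂ)
    (w : Matrix (Fin n) (Fin n) ℂ × ((Fin l → ℂ) × ℂ)) :
    psiL D w = (1 : Polynomial ℂ) ⊗ₜ[ℂ] ((w.1, 0) : Matrix (Fin n) (Fin n) ℂ × ℂ)
      + (Polynomial.X : Polynomial ℂ) ⊗ₜ[ℂ] ((∑ i, w.2.1 i • D i, 0) : Matrix (Fin n) (Fin n) ℂ × ℂ)
      + w.2.2 • ((1 : Polynomial ℂ) ⊗ₜ[ℂ] (((0 : Matrix (Fin n) (Fin n) ℂ), (1 : ℂ)))) := rfl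

set_option maxHeartbeats 1000000 in
theorem levi_aux (n l : ℕ) (μ : Fin l → ℕ) (hμ : ∑ i, μ i = n) (hpos : ∀ i, 1 ≤ μ i)
    (blk : Fin n → Fin l)
    (hblk : ∀ (j : Fin n) (i : Fin l), blk j = i ↔
      (∑ k ∈ Finset.univ.filter (fun k : Fin l => k < i), μ k) ≤ (j : ℕ) ∧
      (j : ℕ) < (∑ k ∈ Finset.univ.filter (fun k : Fin l => k < i), μ k) + μ i)
    (Lset : Set (Matrix (Fin n) (Fin n) ℂ))
    (hLset : Lset = { X | ∀ i j, blk i ≠ blk j → X i j = 0 })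
    (hatL : Submodule ℂ (Polynomial ℂ ⊗[ℂ] (Matrix (Fin n) (Fin n) ℂ × ℂ)))
    (hhatL : hatL = Submodule.span ℂ
      ({ z | ∃ X ∈ Lset, z = (1 : Polynomial ℂ) ⊗ₜ[ℂ] ((X, 0) : Matrix (Fin n) (Fin n) ℂ × ℂ) } ∪
       { z | ∃ (a : ℕ) (X : Matrix (Fin n) (Fin n) ℂ), 1 ≤ a ∧
          z = (Polynomial.X ^ a : Polynomial ℂ) ⊗ₜ[ℂ] ((X, 0) : Matrix (Fin n) (Fin n) ℂ × ℂ) } ∪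
       { (1 : Polynomial ℂ) ⊗ₜ[ℂ] (((0 : Matrix (Fin n) (Fin n) ℂ), (1 : ℂ))) }))
    (derivedCapT : Submodule ℂ (Matrix (Fin n) (Fin n) ℂ))
    (hdCT : derivedCapT =
      (Submodule.span ℂ { z : Matrix (Fin n) (Fin n) ℂ | ∃ X ∈ Lset, ∃ Y ∈ Lset, z = ⁅X, Y⁆ }) ⊓
        (Submodule.span ℂ { z : Matrix (Fin n) (Fin n) ℂ | ∀ i j, i ≠ j → z i j = 0 }))
    (jμ : Submodule ℂ (Polynomial ℂ ⊗[ℂ] (Matrix (Fin n) (Fin n) ℂ × ℂ)))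
    (hjμ : jμ = Submodule.span ℂ
      ({ z | ∃ X : Matrix (Fin n) (Fin n) ℂ, (∀ i j, ¬ j < i → X i j = 0) ∧
          z = (Polynomial.X : Polynomial ℂ) ⊗ₜ[ℂ] ((X, 0) : Matrix (Fin n) (Fin n) ℂ × ℂ) } ∪
       { z | ∃ X : Matrix (Fin n) (Fin n) ℂ, (∀ i j, ¬ i < j → X i j = 0) ∧
          z = (Polynomial.X : Polynomial ℂ) ⊗ₜ[ℂ] ((X, 0) : Matrix (Fin n) (Fin n) ℂ × ℂ) } ∪
       { z | ∃ X ∈ derivedCapT, z = (Polynomial.X : Polynomial ℂ) ⊗ₜ[ℂ] ((X, 0) : Matrix (Fin n) (Fin n) ℂ × ℂ) } ∪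
       { z | ∃ (a : ℕ) (X : Matrix (Fin n) (Fin n) ℂ), 2 ≤ a ∧
          z = (Polynomial.X ^ a : Polynomial ℂ) ⊗ₜ[ℂ] ((X, 0) : Matrix (Fin n) (Fin n) ℂ × ℂ) } )) :
    (∀ x ∈ hatL, ∀ y ∈ hatL, ⁅x, y⁆ ∈ hatL) ∧
    jμ ≤ hatL ∧
    (∀ x ∈ hatL, ∀ y ∈ jμ, ⁅x, y⁆ ∈ jμ) ∧
    (∃ φ : Polynomial ℂ ⊗[ℂ] (Matrix (Fin n) (Fin n) ℂ × ℂ) →ₗ[ℂ]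
        Matrix (Fin n) (Fin n) ℂ × ((Fin l → ℂ) × ℂ),
      (∀ x ∈ hatL, ∀ y ∈ hatL, φ ⁅x, y⁆ = ⁅φ x, φ y⁆) ∧
      (∀ x ∈ hatL, (φ x = 0 ↔ x ∈ jμ)) ∧
      (φ '' (hatL : Set (Polynomial ℂ ⊗[ℂ] (Matrix (Fin n) (Fin n) ℂ × ℂ))) =
        { w : Matrix (Fin n) (Fin n) ℂ × ((Fin l → ℂ) × ℂ) | w.1 ∈ Lset })) := by
  have hLs : ∀ X : Matrix (Fin n) (Fin n) ℂ, X ∈ Lset → ∀ i j, blk i ≠ blk j → X i j = 0 := by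
    intro X hX; rw [hLset] at hX; exact hX
  have hLs' : ∀ X : Matrix (Fin n) (Fin n) ℂ, (∀ i j, blk i ≠ blk j → X i j = 0) → X ∈ Lset := by
    intro X hX; rw [hLset]; exact hX
  -- bracket on the tensor product
  have hbr : ∀ (p q : Polynomial ℂ) (v w : Matrix (Fin n) (Fin n) ℂ × ℂ),
      ⁅p ⊗ₜ[ℂ] v, q ⊗ₜ[ℂ] w⁆ = (p * q) ⊗ₜ[ℂ] (((⁅v.1, w.1⁆ : Matrix (Fin n) (Fin n) ℂ), 0) : Matrix (Fin n) (Fin n) ℂ × ℂ) := by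
    intro p q v w
    rw [LieAlgebra.ExtendScalars.bracket_tmul ℂ (Polynomial ℂ) (Matrix (Fin n) (Fin n) ℂ × ℂ) (Matrix (Fin n) (Fin n) ℂ × ℂ) p q v w]
    congr 1
    rw [Ring.lie_def]
    refine Prod.ext ?_ ?_
    · show v.1 * w.1 - w.1 * v.1 = ⁅v.1, w.1⁆; rw [Ring.lie_def]
    · show v.2 * w.2 - w.2 * v.2 = 0; rw [mul_comm]; ring
  have hsl : ∀ (c : ℂ) (x y : Polynomial ℂ ⊗[ℂ] (Matrix (Fin n) (Fin n) ℂ × ℂ)), ⁅c • x, y⁆ = c • ⁅x, y⁆ := by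
    intro c x y
    have h := smul_lie (algebraMap ℂ (Polynomial ℂ) c) x y
    rwa [algebraMap_smul, algebraMap_smul] at h
  have hls : ∀ (c : ℂ) (x y : Polynomial ℂ ⊗[ℂ] (Matrix (Fin n) (Fin n) ℂ × ℂ)), ⁅x, c • y⁆ = c • ⁅x, y⁆ := by
    intro c x y
    have h := lie_smul (algebraMap ℂ (Polynomial ℂ) c) x y
    rwa [algebraMap_smul, algebraMap_smul] at h
  -- bracket on the target
  have hbrT : ∀ u v : Matrix (Fin n) (Fin n) ℂ × ((Fin l → ℂ) × ℂ), ⁅u, v⁆ = ((⁅u.1, v.1⁆ : Matrix (Fin n) (Fin n) ℂ), 0, 0) := by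
    intro u v
    rw [Ring.lie_def]
    refine Prod.ext ?_ (Prod.ext ?_ ?_)
    · show u.1 * v.1 - v.1 * u.1 = ⁅u.1, v.1⁆; rw [Ring.lie_def]
    · show u.2.1 * v.2.1 - v.2.1 * u.2.1 = (0 : Fin l → ℂ); rw [mul_comm]; ring
    · show u.2.2 * v.2.2 - v.2.2 * u.2.2 = 0; rw [mul_comm]; ring
  have ezlie : ∀ y : Polynomial ℂ ⊗[ℂ] (Matrix (Fin n) (Fin n) ℂ × ℂ), ⁅(0 : Polynomial ℂ ⊗[ℂ] (Matrix (Fin n) (Fin n) ℂ × ℂ)), y⁆ = 0 := fun y => zero_lie y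
  have eliez : ∀ y : Polynomial ℂ ⊗[ℂ] (Matrix (Fin n) (Fin n) ℂ × ℂ), ⁅y, (0 : Polynomial ℂ ⊗[ℂ] (Matrix (Fin n) (Fin n) ℂ × ℂ))⁆ = 0 := fun y => lie_zero y
  have eaddlie : ∀ a b y : Polynomial ℂ ⊗[ℂ] (Matrix (Fin n) (Fin n) ℂ × ℂ), ⁅a + b, y⁆ = ⁅a, y⁆ + ⁅b, y⁆ := fun a b y => add_lie a b y
  have elieadd : ∀ y a b : Polynomial ℂ ⊗[ℂ] (Matrix (Fin n) (Fin n) ℂ × ℂ), ⁅y, a + b⁆ = ⁅y, a⁆ + ⁅y, b⁆ := fun y a b => lie_add y a b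
  have tzlie : ∀ u : Matrix (Fin n) (Fin n) ℂ × ((Fin l → ℂ) × ℂ), ⁅(0 : Matrix (Fin n) (Fin n) ℂ × ((Fin l → ℂ) × ℂ)), u⁆ = 0 := fun u => zero_lie u
  have tliez : ∀ u : Matrix (Fin n) (Fin n) ℂ × ((Fin l → ℂ) × ℂ), ⁅u, (0 : Matrix (Fin n) (Fin n) ℂ × ((Fin l → ℂ) × ℂ))⁆ = 0 := fun u => lie_zero u
  have taddlie : ∀ a b y : Matrix (Fin n) (Fin n) ℂ × ((Fin l → ℂ) × ℂ), ⁅a + b, y⁆ = ⁅a, y⁆ + ⁅b, y⁆ := fun a b y => add_lie a b y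
  have tlieadd : ∀ y a b : Matrix (Fin n) (Fin n) ℂ × ((Fin l → ℂ) × ℂ), ⁅y, a + b⁆ = ⁅y, a⁆ + ⁅y, b⁆ := fun y a b => lie_add y a b
  have tsl : ∀ (c : ℂ) (a b : Matrix (Fin n) (Fin n) ℂ × ((Fin l → ℂ) × ℂ)), ⁅c • a, b⁆ = c • ⁅a, b⁆ := fun c a b => smul_lie c a b
  have tls : ∀ (c : ℂ) (a b : Matrix (Fin n) (Fin n) ℂ × ((Fin l → ℂ) × ℂ)), ⁅a, c • b⁆ = c • ⁅a, b⁆ := fun c a b => lie_smul c a b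
  have mzlie : ∀ A : Matrix (Fin n) (Fin n) ℂ, ⁅(0 : Matrix (Fin n) (Fin n) ℂ), A⁆ = 0 := fun A => zero_lie A
  have mliez : ∀ A : Matrix (Fin n) (Fin n) ℂ, ⁅A, (0 : Matrix (Fin n) (Fin n) ℂ)⁆ = 0 := fun A => lie_zero A
  have msl : ∀ (c : ℂ) (A B : Matrix (Fin n) (Fin n) ℂ), ⁅c • A, B⁆ = c • ⁅A, B⁆ := fun c A B => smul_lie c A B
  have mls : ∀ (c : ℂ) (A B : Matrix (Fin n) (Fin n) ℂ), ⁅A, c • B⁆ = c • ⁅A, B⁆ := fun c A B => lie_smul c A B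
  have mskew : ∀ A B : Matrix (Fin n) (Fin n) ℂ, ⁅A, B⁆ = -⁅B, A⁆ := fun A B => (lie_skew A B).symm
  -- generators of hatL
  have memL1 : ∀ X ∈ Lset, (1 : Polynomial ℂ) ⊗ₜ[ℂ] ((X, 0) : Matrix (Fin n) (Fin n) ℂ × ℂ) ∈ hatL := by
    intro X hX; rw [hhatL]; exact Submodule.subset_span (Or.inl (Or.inl ⟨X, hX, rfl⟩))
  have memL2 : ∀ (a : ℕ) (X : Matrix (Fin n) (Fin n) ℂ), 1 ≤ a →
      (Polynomial.X ^ a : Polynomial ℂ) ⊗ₜ[ℂ] ((X, 0) : Matrix (Fin n) (Fin n) ℂ × ℂ) ∈ hatL := by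
    intro a X ha; rw [hhatL]; exact Submodule.subset_span (Or.inl (Or.inr ⟨a, X, ha, rfl⟩))
  have memL3 : (1 : Polynomial ℂ) ⊗ₜ[ℂ] (((0 : Matrix (Fin n) (Fin n) ℂ), (1 : ℂ)) : Matrix (Fin n) (Fin n) ℂ × ℂ) ∈ hatL := by
    rw [hhatL]; exact Submodule.subset_span (Or.inr rfl)
  -- generators of jμ
  have memJ1 : ∀ X : Matrix (Fin n) (Fin n) ℂ, (∀ i j, ¬ j < i → X i j = 0) →
      (Polynomial.X : Polynomial ℂ) ⊗ₜ[ℂ] ((X, 0) : Matrix (Fin n) (Fin n) ℂ × ℂ) ∈ jμ := by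
    intro X hX; rw [hjμ]; exact Submodule.subset_span (Or.inl (Or.inl (Or.inl ⟨X, hX, rfl⟩)))
  have memJ2 : ∀ X : Matrix (Fin n) (Fin n) ℂ, (∀ i j, ¬ i < j → X i j = 0) →
      (Polynomial.X : Polynomial ℂ) ⊗ₜ[ℂ] ((X, 0) : Matrix (Fin n) (Fin n) ℂ × ℂ) ∈ jμ := by
    intro X hX; rw [hjμ]; exact Submodule.subset_span (Or.inl (Or.inl (Or.inr ⟨X, hX, rfl⟩)))
  have memJ3 : ∀ X ∈ derivedCapT,
      (Polynomial.X : Polynomial ℂ) ⊗ₜ[ℂ] ((X, 0) : Matrix (Fin n) (Fin n) ℂ × ℂ) ∈ jμ := by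
    intro X hX; rw [hjμ]; exact Submodule.subset_span (Or.inl (Or.inr ⟨X, hX, rfl⟩))
  have memJ4 : ∀ (a : ℕ) (X : Matrix (Fin n) (Fin n) ℂ), 2 ≤ a →
      (Polynomial.X ^ a : Polynomial ℂ) ⊗ₜ[ℂ] ((X, 0) : Matrix (Fin n) (Fin n) ℂ × ℂ) ∈ jμ := by
    intro a X ha; rw [hjμ]; exact Submodule.subset_span (Or.inr ⟨a, X, ha, rfl⟩)
  -- block representatives
  obtain ⟨rep, hrep⟩ : ∃ rep : Fin l → Fin n, ∀ i, blk (rep i) = i := by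
    have hb : ∀ i : Fin l, (∑ k ∈ Finset.univ.filter (fun k : Fin l => k < i), μ k) + μ i ≤ n := by
      intro i
      rw [← hμ, ← Finset.sum_filter_add_sum_filter_not Finset.univ (fun k : Fin l => k < i) μ]
      refine Nat.add_le_add_left (Finset.single_le_sum (f := μ) (fun k _ => Nat.zero_le _) ?_) _
      simp
    have hb' : ∀ i : Fin l, (∑ k ∈ Finset.univ.filter (fun k : Fin l => k < i), μ k) < n := by
      intro i
      have := hb i
      have := hpos i
      omega
    refine ⟨fun i => ⟨_, hb' i⟩, fun i => ?_⟩
    rw [hblk]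
    exact ⟨le_refl _, Nat.lt_add_of_pos_right (hpos i)⟩
  set D : Fin l → Matrix (Fin n) (Fin n) ℂ := fun i => Matrix.single (rep i) (rep i) (1 : ℂ) with hD
  have hbtrD1 : ∀ i j, btrL blk (D i) j = if i = j then 1 else 0 := by
    intro i j
    show ∑ k ∈ Finset.univ.filter (fun k => blk k = j), (D i) k k = _
    have hent : ∀ k : Fin n, (D i) k k = if rep i = k then (1:ℂ) else 0 := by
      intro k
      by_cases h : rep i = k
      · subst h; simp [hD, Matrix.single]
      · simp [hD, Matrix.single, h]
    rw [Finset.sum_congr rfl (fun k _ => hent k), Finset.sum_ite_eq]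
    have hmem : (rep i ∈ Finset.filter (fun k => blk k = j) Finset.univ) ↔ i = j := by
      simp [hrep]
    by_cases hij : i = j
    · rw [if_pos (hmem.mpr hij), if_pos hij]
    · rw [if_neg (fun h => hij (hmem.mp h)), if_neg hij]
  have hbtrD : ∀ v : Fin l → ℂ, btrL blk (∑ i, v i • D i) = v := by
    intro v
    rw [map_sum]
    funext j
    rw [Finset.sum_apply]
    simp only [map_smul, Pi.smul_apply, hbtrD1, smul_eq_mul, mul_ite, mul_one, mul_zero]
    simp
  -- elements of degree one with vanishing block trace lie in jμ
  have hJ1 : ∀ M : Matrix (Fin n) (Fin n) ℂ, btrL blk M = 0 →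
      (Polynomial.X : Polynomial ℂ) ⊗ₜ[ℂ] ((M, 0) : Matrix (Fin n) (Fin n) ℂ × ℂ) ∈ jμ := by
    intro M hM
    set Mlow : Matrix (Fin n) (Fin n) ℂ := Matrix.of fun i j => if j < i then M i j else 0 with hMlow
    set Mup : Matrix (Fin n) (Fin n) ℂ := Matrix.of fun i j => if i < j then M i j else 0 with hMup
    set Md : Matrix (Fin n) (Fin n) ℂ := Matrix.of fun i j => if i = j then M i j else 0 with hMd
    have hdec : M = Mlow + Mup + Md := by
      ext i j
      rw [Matrix.add_apply, Matrix.add_apply]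
      show M i j = (if j < i then M i j else 0) + (if i < j then M i j else 0)
        + (if i = j then M i j else 0)
      rcases lt_trichotomy i j with h | h | h
      · rw [if_neg (lt_asymm h), if_pos h, if_neg h.ne]; ring
      · rw [if_neg (h ▸ lt_irrefl i), if_neg (h ▸ lt_irrefl i), if_pos h]; ring
      · rw [if_pos h, if_neg (lt_asymm h), if_neg (ne_of_gt h)]; ring
    have htrMd : btrL blk Md = 0 := by
      funext i
      show ∑ k ∈ Finset.univ.filter (fun k => blk k = i), Md k k = 0
      have he : ∀ k : Fin n, Md k k = M k k := fun k => by
        show (if k = k then M k k else 0) = M k k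
        rw [if_pos rfl]
      rw [Finset.sum_congr rfl (fun k _ => he k)]
      exact congrFun hM i
    have hsplit : ((M, 0) : Matrix (Fin n) (Fin n) ℂ × ℂ) = ((Mlow, 0) : Matrix (Fin n) (Fin n) ℂ × ℂ) + ((Mup, 0) : Matrix (Fin n) (Fin n) ℂ × ℂ) + ((Md, 0) : Matrix (Fin n) (Fin n) ℂ × ℂ) := by
      rw [hdec]
      refine Prod.ext rfl ?_
      show (0 : ℂ) = 0 + 0 + 0
      ring
    rw [hsplit, tmul_add, tmul_add]
    refine add_mem (add_mem ?_ ?_) ?_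
    · refine memJ1 Mlow fun i j hij => ?_
      show (if j < i then M i j else 0) = 0
      rw [if_neg hij]
    · refine memJ2 Mup fun i j hij => ?_
      show (if i < j then M i j else 0) = 0
      rw [if_neg hij]
    · refine memJ3 Md ?_
      rw [hdCT, hLset]
      refine Submodule.mem_inf.mpr ⟨?_, ?_⟩
      · refine diag_mem_commSpan blk rep hrep Md (fun i j hij => ?_) htrMd
        show (if i = j then M i j else 0) = 0
        rw [if_neg hij]
      · refine Submodule.subset_span (fun i j hij => ?_)
        show (if i = j then M i j else 0) = 0
        rw [if_neg hij]
  -- the derived-diagonal part has vanishing block trace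
  have hdctr : ∀ N ∈ derivedCapT, btrL blk N = 0 := by
    intro N hN
    rw [hdCT] at hN
    have h1 : N ∈ Submodule.span ℂ { z : Matrix (Fin n) (Fin n) ℂ | ∃ X ∈ Lset, ∃ Y ∈ Lset, z = ⁅X, Y⁆ } :=
      (Submodule.mem_inf.mp hN).1
    have h2 : Submodule.span ℂ { z : Matrix (Fin n) (Fin n) ℂ | ∃ X ∈ Lset, ∃ Y ∈ Lset, z = ⁅X, Y⁆ } ≤
        LinearMap.ker (btrL blk) := by
      rw [Submodule.span_le]
      rintro z ⟨X, hX, Y, hY, rfl⟩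
      exact LinearMap.mem_ker.mpr (btr_lie blk X Y (hLs X hX))
    exact LinearMap.mem_ker.mp (h2 h1)
  set φ : Polynomial ℂ ⊗[ℂ] (Matrix (Fin n) (Fin n) ℂ × ℂ) →ₗ[ℂ] Matrix (Fin n) (Fin n) ℂ × ((Fin l → ℂ) × ℂ) := phiL blk with hφdef
  have hφtm : ∀ (p : Polynomial ℂ) (v : Matrix (Fin n) (Fin n) ℂ × ℂ),
      φ (p ⊗ₜ[ℂ] v) = (p.coeff 0 • v.1, (p.coeff 1 • btrL blk v.1, p.coeff 0 * v.2)) :=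
    fun p v => rfl
  -- Part 1: hatL is closed under the bracket
  have part1 : ∀ x ∈ hatL, ∀ y ∈ hatL, ⁅x, y⁆ ∈ hatL := by
    intro x hx y hy
    rw [hhatL] at hx hy
    induction hx using Submodule.span_induction with
    | zero => rw [ezlie]; exact zero_mem _
    | add a b ha hb iha ihb => rw [eaddlie]; exact add_mem iha ihb
    | smul c a ha ih => rw [hsl]; exact Submodule.smul_mem _ _ ih
    | mem x hxs =>
      induction hy using Submodule.span_induction with
      | zero => rw [eliez]; exact zero_mem _
      | add a b ha hb iha ihb => rw [elieadd]; exact add_mem iha ihb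
      | smul c a ha ih => rw [hls]; exact Submodule.smul_mem _ _ ih
      | mem y hys =>
        rcases hxs with (⟨X, hX, rfl⟩ | ⟨a, X, ha, rfl⟩) | rfl
        · rcases hys with (⟨Y, hY, rfl⟩ | ⟨b, Y, hb, rfl⟩) | rfl
          · rw [hbr, one_mul]
            exact memL1 _ (hLs' _ (Lset_lie blk X Y (hLs X hX) (hLs Y hY)))
          · rw [hbr, one_mul]
            exact memL2 b _ hb
          · rw [hbr]
            show (1 * 1 : Polynomial ℂ) ⊗ₜ[ℂ] (((⁅X, (0:Matrix (Fin n) (Fin n) ℂ)⁆ : Matrix (Fin n) (Fin n) ℂ), 0) : Matrix (Fin n) (Fin n) ℂ × ℂ) ∈ hatL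
            rw [mliez, Prod.mk_zero_zero, tmul_zero]
            exact zero_mem _
        · rcases hys with (⟨Y, hY, rfl⟩ | ⟨b, Y, hb, rfl⟩) | rfl
          · rw [hbr, mul_one]
            exact memL2 a _ ha
          · rw [hbr, ← pow_add]
            exact memL2 (a + b) _ (by omega)
          · rw [hbr]
            show (Polynomial.X ^ a * 1 : Polynomial ℂ) ⊗ₜ[ℂ] (((⁅X, (0:Matrix (Fin n) (Fin n) ℂ)⁆ : Matrix (Fin n) (Fin n) ℂ), 0) : Matrix (Fin n) (Fin n) ℂ × ℂ) ∈ hatL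
            rw [mliez, Prod.mk_zero_zero, tmul_zero]
            exact zero_mem _
        · rcases hys with (⟨Y, hY, rfl⟩ | ⟨b, Y, hb, rfl⟩) | rfl <;>
          · rw [hbr]
            rw [show (⁅(((0:Matrix (Fin n) (Fin n) ℂ), (1:ℂ)) : Matrix (Fin n) (Fin n) ℂ × ℂ).1, _⁆ : Matrix (Fin n) (Fin n) ℂ) = (0:Matrix (Fin n) (Fin n) ℂ) from mzlie _]
            rw [Prod.mk_zero_zero, tmul_zero]
            exact zero_mem _
  -- Part 2: jμ ≤ hatL
  have part2 : jμ ≤ hatL := by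
    rw [hjμ, Submodule.span_le]
    rintro z (((⟨X, hX, rfl⟩ | ⟨X, hX, rfl⟩) | ⟨X, hX, rfl⟩) | ⟨a, X, ha, rfl⟩)
    · rw [show (Polynomial.X : Polynomial ℂ) = Polynomial.X ^ 1 by rw [pow_one]]
      exact memL2 1 X le_rfl
    · rw [show (Polynomial.X : Polynomial ℂ) = Polynomial.X ^ 1 by rw [pow_one]]
      exact memL2 1 X le_rfl
    · rw [show (Polynomial.X : Polynomial ℂ) = Polynomial.X ^ 1 by rw [pow_one]]
      exact memL2 1 X le_rfl
    · exact memL2 a X (by omega)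
  -- Part 3: jμ is an ideal in hatL
  have part3 : ∀ x ∈ hatL, ∀ y ∈ jμ, ⁅x, y⁆ ∈ jμ := by
    intro x hx y hy
    rw [hhatL] at hx
    rw [hjμ] at hy
    induction hx using Submodule.span_induction with
    | zero => rw [ezlie]; exact zero_mem _
    | add a b ha hb iha ihb => rw [eaddlie]; exact add_mem iha ihb
    | smul c a ha ih => rw [hsl]; exact Submodule.smul_mem _ _ ih
    | mem x hxs =>
      induction hy using Submodule.span_induction with
      | zero => rw [eliez]; exact zero_mem _
      | add a b ha hb iha ihb => rw [elieadd]; exact add_mem iha ihb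
      | smul c a ha ih => rw [hls]; exact Submodule.smul_mem _ _ ih
      | mem y hys =>
        have hy1 : (∃ N : Matrix (Fin n) (Fin n) ℂ, y = (Polynomial.X : Polynomial ℂ) ⊗ₜ[ℂ] ((N, 0) : Matrix (Fin n) (Fin n) ℂ × ℂ)) ∨
            (∃ (b : ℕ) (N : Matrix (Fin n) (Fin n) ℂ), 2 ≤ b ∧
              y = (Polynomial.X ^ b : Polynomial ℂ) ⊗ₜ[ℂ] ((N, 0) : Matrix (Fin n) (Fin n) ℂ × ℂ)) := by
          rcases hys with ((⟨N, _, rfl⟩ | ⟨N, _, rfl⟩) | ⟨N, _, rfl⟩) | ⟨b, N, hb, rfl⟩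
          · exact Or.inl ⟨N, rfl⟩
          · exact Or.inl ⟨N, rfl⟩
          · exact Or.inl ⟨N, rfl⟩
          · exact Or.inr ⟨b, N, hb, rfl⟩
        rcases hxs with (⟨X, hX, rfl⟩ | ⟨a, X, ha, rfl⟩) | rfl
        · rcases hy1 with ⟨N, rfl⟩ | ⟨b, N, hb, rfl⟩
          · rw [hbr, one_mul]
            exact hJ1 _ (btr_lie blk X N (hLs X hX))
          · rw [hbr, one_mul]
            exact memJ4 b _ hb
        · rcases hy1 with ⟨N, rfl⟩ | ⟨b, N, hb, rfl⟩
          · rw [hbr, show (Polynomial.X ^ a * Polynomial.X : Polynomial ℂ) =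
              Polynomial.X ^ (a + 1) by rw [pow_add, pow_one]]
            exact memJ4 (a + 1) _ (by omega)
          · rw [hbr, ← pow_add]
            exact memJ4 (a + b) _ (by omega)
        · rcases hy1 with ⟨N, rfl⟩ | ⟨b, N, hb, rfl⟩ <;>
          · rw [hbr]
            rw [show (⁅(((0:Matrix (Fin n) (Fin n) ℂ), (1:ℂ)) : Matrix (Fin n) (Fin n) ℂ × ℂ).1, _⁆ : Matrix (Fin n) (Fin n) ℂ) = (0:Matrix (Fin n) (Fin n) ℂ) from mzlie _]
            rw [Prod.mk_zero_zero, tmul_zero]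
            exact zero_mem _
  -- Part 4a: bracket compatibility of φ on hatL
  have hkey : ∀ (p q : Polynomial ℂ) (v w : Matrix (Fin n) (Fin n) ℂ × ℂ),
      (p * q).coeff 1 • btrL blk ⁅v.1, w.1⁆ = 0 →
      φ ⁅p ⊗ₜ[ℂ] v, q ⊗ₜ[ℂ] w⁆ = ⁅φ (p ⊗ₜ[ℂ] v), φ (q ⊗ₜ[ℂ] w)⁆ := by
    intro p q v w h
    rw [hbr, hφtm, hφtm, hφtm, hbrT]
    refine Prod.ext ?_ (Prod.ext ?_ ?_)
    · show (p * q).coeff 0 • ⁅v.1, w.1⁆ = ⁅p.coeff 0 • v.1, q.coeff 0 • w.1⁆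
      rw [Polynomial.mul_coeff_zero, msl, mls, mul_smul]
    · exact h
    · show (p * q).coeff 0 * 0 = 0
      rw [mul_zero]
  have part4a : ∀ x ∈ hatL, ∀ y ∈ hatL, φ ⁅x, y⁆ = ⁅φ x, φ y⁆ := by
    intro x hx y hy
    rw [hhatL] at hx hy
    induction hx using Submodule.span_induction with
    | zero => rw [ezlie, map_zero]; rw [tzlie]
    | add a b ha hb iha ihb => rw [eaddlie, map_add, map_add, iha, ihb, taddlie]
    | smul c a ha ih => rw [hsl, map_smul, map_smul, ih, tsl]
    | mem x hxs =>
      induction hy using Submodule.span_induction with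
      | zero => rw [eliez, map_zero]; rw [tliez]
      | add a b ha hb iha ihb => rw [elieadd, map_add, map_add, iha, ihb, tlieadd]
      | smul c a ha ih => rw [hls, map_smul, map_smul, ih, tls]
      | mem y hys =>
        rcases hxs with (⟨X, hX, rfl⟩ | ⟨a, X, ha, rfl⟩) | rfl
        · rcases hys with (⟨Y, hY, rfl⟩ | ⟨b, Y, hb, rfl⟩) | rfl
          · exact hkey _ _ _ _ (by rw [btr_lie blk X Y (hLs X hX), smul_zero])
          · exact hkey _ _ _ _ (by rw [show ((X,0):Matrix (Fin n) (Fin n) ℂ × ℂ).1 = X from rfl,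
              show ((Y,0):Matrix (Fin n) (Fin n) ℂ × ℂ).1 = Y from rfl, btr_lie blk X Y (hLs X hX), smul_zero])
          · refine hkey _ _ _ _ ?_
            rw [show (⁅((X, 0) : Matrix (Fin n) (Fin n) ℂ × ℂ).1, (((0:Matrix (Fin n) (Fin n) ℂ), (1:ℂ)) : Matrix (Fin n) (Fin n) ℂ × ℂ).1⁆ : Matrix (Fin n) (Fin n) ℂ) = (0:Matrix (Fin n) (Fin n) ℂ)
              from mliez _]
            rw [map_zero, smul_zero]
        · rcases hys with (⟨Y, hY, rfl⟩ | ⟨b, Y, hb, rfl⟩) | rfl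
          · refine hkey _ _ _ _ ?_
            show _ • btrL blk ⁅X, Y⁆ = 0
            rw [mskew, map_neg, btr_lie blk Y X (hLs Y hY), neg_zero, smul_zero]
          · refine hkey _ _ _ _ ?_
            rw [← pow_add, Polynomial.coeff_X_pow, if_neg (by omega : ¬ (1 : ℕ) = a + b)]
            rw [zero_smul]
          · refine hkey _ _ _ _ ?_
            rw [show (⁅((X, 0) : Matrix (Fin n) (Fin n) ℂ × ℂ).1, (((0:Matrix (Fin n) (Fin n) ℂ), (1:ℂ)) : Matrix (Fin n) (Fin n) ℂ × ℂ).1⁆ : Matrix (Fin n) (Fin n) ℂ) = (0:Matrix (Fin n) (Fin n) ℂ)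
              from mliez _]
            rw [map_zero, smul_zero]
        · rcases hys with (⟨Y, hY, rfl⟩ | ⟨b, Y, hb, rfl⟩) | rfl <;>
          · refine hkey _ _ _ _ ?_
            rw [show (⁅(((0:Matrix (Fin n) (Fin n) ℂ), (1:ℂ)) : Matrix (Fin n) (Fin n) ℂ × ℂ).1, _⁆ : Matrix (Fin n) (Fin n) ℂ) = (0:Matrix (Fin n) (Fin n) ℂ) from mzlie _]
            rw [map_zero, smul_zero]
  -- φ vanishes on jμ
  have hker0 : ∀ y ∈ jμ, φ y = 0 := by
    intro y hy
    rw [hjμ] at hy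
    induction hy using Submodule.span_induction with
    | zero => rw [map_zero]
    | add a b ha hb iha ihb => rw [map_add, iha, ihb, add_zero]
    | smul c a ha ih => rw [map_smul, ih, smul_zero]
    | mem y hys =>
      rcases hys with ((⟨N, hN, rfl⟩ | ⟨N, hN, rfl⟩) | ⟨N, hN, rfl⟩) | ⟨b, N, hb, rfl⟩
      · rw [hφtm]
        have : btrL blk N = 0 := by
          funext j
          show ∑ k ∈ Finset.univ.filter (fun k => blk k = j), N k k = 0
          exact Finset.sum_eq_zero fun k _ => hN k k (lt_irrefl k)
        simp [Polynomial.coeff_X_zero, Polynomial.coeff_X_one, this]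
      · rw [hφtm]
        have : btrL blk N = 0 := by
          funext j
          show ∑ k ∈ Finset.univ.filter (fun k => blk k = j), N k k = 0
          exact Finset.sum_eq_zero fun k _ => hN k k (lt_irrefl k)
        simp [Polynomial.coeff_X_zero, Polynomial.coeff_X_one, this]
      · rw [hφtm]
        simp [Polynomial.coeff_X_zero, Polynomial.coeff_X_one, hdctr N hN]
      · rw [hφtm]
        rw [Polynomial.coeff_X_pow, Polynomial.coeff_X_pow]
        rw [if_neg (by omega : ¬ (0:ℕ) = b), if_neg (by omega : ¬ (1:ℕ) = b)]
        simp
  have c10 : (1 : Polynomial ℂ).coeff 0 = 1 := by simp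
  have c11 : (1 : Polynomial ℂ).coeff 1 = 0 := by rw [Polynomial.coeff_one]; norm_num
  -- φ ∘ ψ = id
  have hφψ : ∀ w : Matrix (Fin n) (Fin n) ℂ × ((Fin l → ℂ) × ℂ), φ (psiL D w) = w := by
    intro w
    rw [psiL_apply, map_add, map_add, map_smul, hφtm, hφtm, hφtm, hbtrD]
    simp only [c10, c11, Polynomial.coeff_X_zero, Polynomial.coeff_X_one]
    refine Prod.ext ?_ (Prod.ext ?_ ?_) <;> simp
  -- every element of hatL is congruent mod jμ to ψ (φ x)
  have hsec : ∀ x ∈ hatL, x - psiL D (φ x) ∈ jμ := by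
    intro x hx
    rw [hhatL] at hx
    induction hx using Submodule.span_induction with
    | zero => rw [map_zero, map_zero, sub_zero]; exact zero_mem _
    | add a b ha hb iha ihb =>
      rw [map_add, map_add]
      have : a + b - (psiL D (φ a) + psiL D (φ b))
          = (a - psiL D (φ a)) + (b - psiL D (φ b)) := by abel
      rw [this]
      exact add_mem iha ihb
    | smul c a ha ih =>
      rw [map_smul, map_smul, ← smul_sub]
      exact Submodule.smul_mem _ _ ih
    | mem x hxs =>
      rcases hxs with (⟨X, hX, rfl⟩ | ⟨a, X, ha, rfl⟩) | rfl
      · have hx1 : φ ((1 : Polynomial ℂ) ⊗ₜ[ℂ] ((X, 0) : Matrix (Fin n) (Fin n) ℂ × ℂ)) = (X, 0, 0) := by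
          rw [hφtm]; refine Prod.ext ?_ (Prod.ext ?_ ?_) <;> simp [c10, c11]
        rw [hx1, psiL_apply]
        show (1 : Polynomial ℂ) ⊗ₜ[ℂ] ((X, 0) : Matrix (Fin n) (Fin n) ℂ × ℂ) -
          ((1 : Polynomial ℂ) ⊗ₜ[ℂ] ((X, 0) : Matrix (Fin n) (Fin n) ℂ × ℂ)
            + Polynomial.X ⊗ₜ[ℂ] ((∑ i, (0:ℂ) • D i, 0) : Matrix (Fin n) (Fin n) ℂ × ℂ)
            + (0:ℂ) • ((1 : Polynomial ℂ) ⊗ₜ[ℂ] (((0:Matrix (Fin n) (Fin n) ℂ), (1:ℂ)) : Matrix (Fin n) (Fin n) ℂ × ℂ))) ∈ jμ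
        have h2 : ((∑ i, (0:ℂ) • D i, (0:ℂ)) : Matrix (Fin n) (Fin n) ℂ × ℂ) = 0 := by simp
        rw [h2, tmul_zero, zero_smul, add_zero, add_zero, sub_self]
        exact zero_mem _
      · rcases Nat.lt_or_ge a 2 with ha2 | ha2
        · have ha1 : a = 1 := by omega
          subst ha1
          rw [pow_one]
          have hx1 : φ (Polynomial.X ⊗ₜ[ℂ] ((X, 0) : Matrix (Fin n) (Fin n) ℂ × ℂ)) = (0, btrL blk X, 0) := by
            rw [hφtm]; refine Prod.ext ?_ (Prod.ext ?_ ?_) <;> simp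
          rw [hx1, psiL_apply]
          show Polynomial.X ⊗ₜ[ℂ] ((X, 0) : Matrix (Fin n) (Fin n) ℂ × ℂ) -
            ((1 : Polynomial ℂ) ⊗ₜ[ℂ] (((0:Matrix (Fin n) (Fin n) ℂ), (0:ℂ)) : Matrix (Fin n) (Fin n) ℂ × ℂ)
              + Polynomial.X ⊗ₜ[ℂ] ((∑ i, btrL blk X i • D i, 0) : Matrix (Fin n) (Fin n) ℂ × ℂ)
              + (0:ℂ) • ((1 : Polynomial ℂ) ⊗ₜ[ℂ] (((0:Matrix (Fin n) (Fin n) ℂ), (1:ℂ)) : Matrix (Fin n) (Fin n) ℂ × ℂ))) ∈ jμ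
          have h1 : (((0:Matrix (Fin n) (Fin n) ℂ), (0:ℂ)) : Matrix (Fin n) (Fin n) ℂ × ℂ) = 0 := by simp
          rw [h1, tmul_zero, zero_smul, zero_add, add_zero, ← tmul_sub]
          have h2 : (((X, 0) : Matrix (Fin n) (Fin n) ℂ × ℂ) - ((∑ i, btrL blk X i • D i, 0) : Matrix (Fin n) (Fin n) ℂ × ℂ))
              = ((X - ∑ i, btrL blk X i • D i, 0) : Matrix (Fin n) (Fin n) ℂ × ℂ) := by simp
          rw [h2]
          refine hJ1 _ ?_
          rw [map_sub, hbtrD, sub_self]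
        · have hx1 : φ ((Polynomial.X ^ a : Polynomial ℂ) ⊗ₜ[ℂ] ((X, 0) : Matrix (Fin n) (Fin n) ℂ × ℂ)) = 0 := by
            rw [hφtm]
            refine Prod.ext ?_ (Prod.ext ?_ ?_) <;>
              simp [Polynomial.coeff_X_pow] <;>
              (intro h; exact absurd h (by omega))
          rw [hx1, map_zero, sub_zero]
          exact memJ4 a X ha2
      · have hx1 : φ ((1 : Polynomial ℂ) ⊗ₜ[ℂ] (((0:Matrix (Fin n) (Fin n) ℂ), (1:ℂ)) : Matrix (Fin n) (Fin n) ℂ × ℂ)) = (0, 0, 1) := by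
          rw [hφtm]; refine Prod.ext ?_ (Prod.ext ?_ ?_) <;> simp [c10, c11]
        rw [hx1, psiL_apply]
        show (1 : Polynomial ℂ) ⊗ₜ[ℂ] (((0:Matrix (Fin n) (Fin n) ℂ), (1:ℂ)) : Matrix (Fin n) (Fin n) ℂ × ℂ) -
          ((1 : Polynomial ℂ) ⊗ₜ[ℂ] (((0:Matrix (Fin n) (Fin n) ℂ), (0:ℂ)) : Matrix (Fin n) (Fin n) ℂ × ℂ)
            + Polynomial.X ⊗ₜ[ℂ] ((∑ i, (0:ℂ) • D i, 0) : Matrix (Fin n) (Fin n) ℂ × ℂ)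
            + (1:ℂ) • ((1 : Polynomial ℂ) ⊗ₜ[ℂ] (((0:Matrix (Fin n) (Fin n) ℂ), (1:ℂ)) : Matrix (Fin n) (Fin n) ℂ × ℂ))) ∈ jμ
        have h1 : (((0:Matrix (Fin n) (Fin n) ℂ), (0:ℂ)) : Matrix (Fin n) (Fin n) ℂ × ℂ) = 0 := by simp
        have h2 : ((∑ i, (0:ℂ) • D i, (0:ℂ)) : Matrix (Fin n) (Fin n) ℂ × ℂ) = 0 := by simp
        rw [h1, h2, tmul_zero, tmul_zero, one_smul, zero_add, zero_add, sub_self]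
        exact zero_mem _
  have part4b : ∀ x ∈ hatL, (φ x = 0 ↔ x ∈ jμ) := by
    intro x hx
    constructor
    · intro h
      have := hsec x hx
      rwa [h, map_zero, sub_zero] at this
    · exact hker0 x
  -- image
  have hψmem : ∀ w : Matrix (Fin n) (Fin n) ℂ × ((Fin l → ℂ) × ℂ), w.1 ∈ Lset → psiL D w ∈ hatL := by
    intro w hw
    rw [psiL_apply]
    refine add_mem (add_mem (memL1 _ hw) ?_) (Submodule.smul_mem _ _ memL3)
    rw [show (Polynomial.X : Polynomial ℂ) = Polynomial.X ^ 1 by rw [pow_one]]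
    exact memL2 1 _ le_rfl
  have part4c : φ '' (hatL : Set (Polynomial ℂ ⊗[ℂ] (Matrix (Fin n) (Fin n) ℂ × ℂ))) = { w : Matrix (Fin n) (Fin n) ℂ × ((Fin l → ℂ) × ℂ) | w.1 ∈ Lset } := by
    ext w
    constructor
    · rintro ⟨x, hx, rfl⟩
      replace hx : x ∈ hatL := hx
      rw [hhatL] at hx
      induction hx using Submodule.span_induction with
      | zero => rw [map_zero]; exact hLs' _ fun i j _ => rfl
      | add a b ha hb iha ihb =>
        rw [map_add]
        refine hLs' _ fun i j hij => ?_
        show ((φ a).1 + (φ b).1) i j = 0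
        rw [Matrix.add_apply, hLs _ iha i j hij, hLs _ ihb i j hij, add_zero]
      | smul c a ha ih =>
        rw [map_smul]
        refine hLs' _ fun i j hij => ?_
        show (c • (φ a).1) i j = 0
        rw [Matrix.smul_apply, hLs _ ih i j hij, smul_zero]
      | mem x hxs =>
        rcases hxs with (⟨X, hX, rfl⟩ | ⟨a, X, ha, rfl⟩) | rfl
        · rw [hφtm]
          show ((1 : Polynomial ℂ).coeff 0 • X) ∈ Lset
          rw [c10, one_smul]
          exact hX
        · rw [hφtm]
          show ((Polynomial.X ^ a : Polynomial ℂ).coeff 0 • X) ∈ Lset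
          rw [Polynomial.coeff_X_pow, if_neg (by omega : ¬ (0:ℕ) = a), zero_smul]
          exact hLs' _ fun i j _ => rfl
        · rw [hφtm]
          show ((1 : Polynomial ℂ).coeff 0 • (0:Matrix (Fin n) (Fin n) ℂ)) ∈ Lset
          rw [smul_zero]
          exact hLs' _ fun i j _ => rfl
    · intro hw
      exact ⟨psiL D w, hψmem w hw, hφψ w⟩
  exact ⟨part1, part2, part3, φ, part4a, part4b, part4c⟩

theorem ring_bracket_eq {n : ℕ} (x y : Polynomial ℂ ⊗[ℂ] (Matrix (Fin n) (Fin n) ℂ × ℂ)) :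
    @Bracket.bracket _ _ Ring.instBracket x y = ⁅x, y⁆ := by
  show x * y - y * x = _
  induction x using TensorProduct.induction_on with
  | zero => rw [show ⁅(0 : Polynomial ℂ ⊗[ℂ] (Matrix (Fin n) (Fin n) ℂ × ℂ)), y⁆ = 0 from zero_lie y]; simp
  | tmul p v =>
    induction y using TensorProduct.induction_on with
    | zero => rw [show ⁅p ⊗ₜ[ℂ] v, (0 : Polynomial ℂ ⊗[ℂ] (Matrix (Fin n) (Fin n) ℂ × ℂ))⁆ = 0 from lie_zero (p ⊗ₜ[ℂ] v)]; simp
    | tmul q w =>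
      rw [Algebra.TensorProduct.tmul_mul_tmul, Algebra.TensorProduct.tmul_mul_tmul, mul_comm q p,
        ← tmul_sub]
      rfl
    | add a b ha hb => rw [show ⁅p ⊗ₜ[ℂ] v, a + b⁆ = ⁅p ⊗ₜ[ℂ] v, a⁆ + ⁅p ⊗ₜ[ℂ] v, b⁆ from lie_add (p ⊗ₜ[ℂ] v) a b, ← ha, ← hb]; noncomm_ring
  | add a b ha hb => rw [show ⁅a + b, y⁆ = ⁅a, y⁆ + ⁅b, y⁆ from add_lie a b y, ← ha, ← hb]; noncomm_ring

end

set_option maxHeartbeats 1000000 in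
/-- Let `g = gl_n(ℂ)`, let `μ` be a composition of `n` with associated block function
`blk : Fin n → Fin l`, and let `l_μ ⊆ g` be the corresponding standard Levi subalgebra
(block matrices).  Work inside `E = ℂ[t] ⊗ (g × ℂ)`, the polynomial loop algebra of `g`
extended by a central element `1 = 1 ⊗ (0,1)` (the bracket is
`[X ⊗ t^a, Y ⊗ t^b] = [X,Y] ⊗ t^{a+b}` with `1` central, the cocycle being trivial here).
Let `l̂_μ^+ = l_μ ⊕ (g ⊗ tℂ[t]) ⊕ ℂ·1` and
`j_μ = (n_- ⊗ t) ⊕ (n_+ ⊗ t) ⊕ (([l_μ,l_μ] ∩ t) ⊗ t) ⊕ (g ⊗ t²ℂ[t])`.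
Then `l̂_μ^+` is a Lie subalgebra, `j_μ ⊆ l̂_μ^+` is a Lie ideal, and the quotient
`l̂_μ^+ / j_μ` is isomorphic as a Lie algebra to `l_μ ⊕ (z_μ ⊗ t) ⊕ ℂ·1` with `z_μ ⊗ t ≅ ℂ^l`
(the centre of `l_μ`) and `ℂ·1` central: there is a linear map `φ` to
`g × (ℂ^l × ℂ)` which is bracket-compatible on `l̂_μ^+`, has kernel `j_μ` there, and maps
`l̂_μ^+` onto `l_μ × ℂ^l × ℂ`. -/
theorem levi_ideal_and_quotient
    (n l : ℕ) (μ : Fin l → ℕ) (hμ : ∑ i, μ i = n) (hpos : ∀ i, 1 ≤ μ i)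
    (blk : Fin n → Fin l)
    (hblk : ∀ (j : Fin n) (i : Fin l), blk j = i ↔
      (∑ k ∈ Finset.univ.filter (fun k : Fin l => k < i), μ k) ≤ (j : ℕ) ∧
      (j : ℕ) < (∑ k ∈ Finset.univ.filter (fun k : Fin l => k < i), μ k) + μ i) :
    -- `gle = g ⊕ ℂ` (with `ℂ` commuting with everything), `E = ℂ[t] ⊗ gle`
    let gl := Matrix (Fin n) (Fin n) ℂ
    let gle := gl × ℂ
    let E := Polynomial ℂ ⊗[ℂ] gle
    -- the Levi subalgebra determined by the blocks of `μ`
    let Lset : Set gl := { X | ∀ i j, blk i ≠ blk j → X i j = 0 }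
    -- `l̂_μ^+ = l_μ ⊕ (g ⊗ tℂ[t]) ⊕ ℂ·1`
    let hatL : Submodule ℂ E := Submodule.span ℂ
      ({ z | ∃ X ∈ Lset, z = (1 : Polynomial ℂ) ⊗ₜ[ℂ] ((X, 0) : gle) } ∪
       { z | ∃ (a : ℕ) (X : gl), 1 ≤ a ∧ z = (Polynomial.X ^ a : Polynomial ℂ) ⊗ₜ[ℂ] ((X, 0) : gle) } ∪
       { (1 : Polynomial ℂ) ⊗ₜ[ℂ] (((0 : gl), (1 : ℂ)) : gle) })
    -- `[l_μ, l_μ] ∩ t`: the intersection of the derived subalgebra of the Levi with the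
    -- diagonal matrices
    let derivedCapT : Submodule ℂ gl :=
      (Submodule.span ℂ { z : gl | ∃ X ∈ Lset, ∃ Y ∈ Lset, z = ⁅X, Y⁆ }) ⊓
        (Submodule.span ℂ { z : gl | ∀ i j, i ≠ j → z i j = 0 })
    -- `j_μ = n_-[1] ⊕ n_+[1] ⊕ ([l_μ,l_μ] ∩ t)[1] ⊕ g ⊗ t²ℂ[t]`
    let jμ : Submodule ℂ E := Submodule.span ℂ
      ({ z | ∃ X : gl, (∀ i j, ¬ j < i → X i j = 0) ∧
          z = (Polynomial.X : Polynomial ℂ) ⊗ₜ[ℂ] ((X, 0) : gle) } ∪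
       { z | ∃ X : gl, (∀ i j, ¬ i < j → X i j = 0) ∧
          z = (Polynomial.X : Polynomial ℂ) ⊗ₜ[ℂ] ((X, 0) : gle) } ∪
       { z | ∃ X ∈ derivedCapT, z = (Polynomial.X : Polynomial ℂ) ⊗ₜ[ℂ] ((X, 0) : gle) } ∪
       { z | ∃ (a : ℕ) (X : gl), 2 ≤ a ∧
          z = (Polynomial.X ^ a : Polynomial ℂ) ⊗ₜ[ℂ] ((X, 0) : gle) })
    -- conclusions
    (∀ x ∈ hatL, ∀ y ∈ hatL, ⁅x, y⁆ ∈ hatL) ∧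
    jμ ≤ hatL ∧
    (∀ x ∈ hatL, ∀ y ∈ jμ, ⁅x, y⁆ ∈ jμ) ∧
    (∃ φ : E →ₗ[ℂ] gl × ((Fin l → ℂ) × ℂ),
      (∀ x ∈ hatL, ∀ y ∈ hatL, φ ⁅x, y⁆ = ⁅φ x, φ y⁆) ∧
      (∀ x ∈ hatL, (φ x = 0 ↔ x ∈ jμ)) ∧
      (φ '' (hatL : Set E) = { w : gl × ((Fin l → ℂ) × ℂ) | w.1 ∈ Lset })) := by
  intro gl gle E Lset hatL derivedCapT jμ
  have h := levi_aux n l μ hμ hpos blk hblk Lset rfl hatL rfl derivedCapT rfl jμ rfl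
  simp only [← ring_bracket_eq] at h
  exact h
end

section
/- Let t ∈ C and m ≥ 2. Let D be the associative algebra generated by x_1,…,x_m, q_1,…,q_m with relations [x_i,x_j] = [q_i,q_j] = 0 and [q_i,x_j] = t·δ_{ij}, together with an action of S_m permuting the x_i and the q_i. Suppose ρ is a representation of D ⋊ S_m on a module M over C[x_1,…,x_m][δ^{-1}] ⋊ S_m extending the given module structure, where δ = Π_{i<j}(x_i − x_j). Define ρ'(q_i) := ρ(q_i) + Σ_{j ≠ i} (x_i − x_j)^{-1} (acting by multiplication by the rational function). Then ρ' again satisfies [ρ'(q_i), ρ'(q_j)] = 0, [ρ'(q_i), x_j] = t·δ_{ij}, and w ∘ ρ'(q_i) ∘ w^{-1} = ρ'(q_{w(i)}) for all w ∈ S_m; i.e., ρ' is again a representation of D ⋊ S_m on M. -/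
set_option maxHeartbeats 1000000


open MvPolynomial

/-- The discriminant `δ = ∏_{i<j} (x_i - x_j)`. -/
noncomputable def deltaPoly (m : ℕ) : MvPolynomial (Fin m) ℂ :=
  ∏ p ∈ Finset.univ.filter (fun p : Fin m × Fin m => p.1 < p.2), (X p.1 - X p.2)

/-- The localization `ℂ[x_1,…,x_m][δ⁻¹]`. -/
noncomputable abbrev RegFns (m : ℕ) := Localization.Away (deltaPoly m)

/-- The operator of multiplication by `r ∈ ℂ[x][δ⁻¹]` on a module `M`. -/
noncomputable def mulOp (m : ℕ) (M : Type*) [AddCommGroup M] [Module ℂ M]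
    [Module (RegFns m) M] [SMulCommClass ℂ (RegFns m) M] (r : RegFns m) :
    Module.End ℂ M where
  toFun v := r • v
  map_add' x y := smul_add r x y
  map_smul' c v := (smul_comm c r v).symm

section Aux

variable {m : ℕ} {M : Type*} [AddCommGroup M] [Module ℂ M]
    [Module (RegFns m) M] [SMulCommClass ℂ (RegFns m) M]

lemma ring_inverse_neg {R : Type*} [CommRing R] (a : R) :
    Ring.inverse (-a) = -Ring.inverse a := by
  by_cases h : IsUnit a
  · have hn : IsUnit (-a) := h.neg
    have h1 : (-a) * (-Ring.inverse a) = 1 := by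
      rw [neg_mul_neg, Ring.mul_inverse_cancel _ h]
    calc Ring.inverse (-a) = Ring.inverse (-a) * ((-a) * (-Ring.inverse a)) := by
          rw [h1, mul_one]
      _ = (Ring.inverse (-a) * (-a)) * (-Ring.inverse a) := by ring
      _ = -Ring.inverse a := by rw [Ring.inverse_mul_cancel _ hn, one_mul]
  · have hn : ¬ IsUnit (-a) := fun hc => h (by simpa using hc.neg)
    rw [Ring.inverse_non_unit _ h, Ring.inverse_non_unit _ hn, neg_zero]

lemma mulOp_apply (r : RegFns m) (v : M) : mulOp m M r v = r • v := rfl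

lemma mulOp_mul (r s : RegFns m) :
    mulOp m M (r * s) = mulOp m M r * mulOp m M s := by
  apply LinearMap.ext; intro v
  simp [mulOp_apply, Module.End.mul_apply, mul_smul]

lemma mulOp_one : mulOp m M 1 = 1 := by
  apply LinearMap.ext; intro v; simp [mulOp_apply]

lemma mulOp_sub (r s : RegFns m) :
    mulOp m M (r - s) = mulOp m M r - mulOp m M s := by
  apply LinearMap.ext; intro v
  simp [mulOp_apply, sub_smul]

lemma mulOp_sum {ι : Type*} (s : Finset ι) (g : ι → RegFns m) :
    mulOp m M (∑ j ∈ s, g j) = ∑ j ∈ s, mulOp m M (g j) := by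
  apply LinearMap.ext; intro v
  simp [mulOp_apply, Finset.sum_smul]

lemma mulOp_comm (r s : RegFns m) :
    mulOp m M r * mulOp m M s = mulOp m M s * mulOp m M r := by
  rw [← mulOp_mul, ← mulOp_mul, mul_comm]

/-- `X j - X k` is invertible in `ℂ[x][δ⁻¹]` for `j ≠ k`. -/
lemma isUnit_sub_X {j k : Fin m} (h : j ≠ k) :
    IsUnit (algebraMap (MvPolynomial (Fin m) ℂ) (RegFns m) (X j - X k)) := by
  have hδ : IsUnit (algebraMap (MvPolynomial (Fin m) ℂ) (RegFns m) (deltaPoly m)) :=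
    IsLocalization.Away.algebraMap_isUnit _
  have key : ∀ {a b : Fin m}, a < b →
      IsUnit (algebraMap (MvPolynomial (Fin m) ℂ) (RegFns m) (X a - X b)) := by
    intro a b hab
    have hdvd : (X a - X b : MvPolynomial (Fin m) ℂ) ∣ deltaPoly m :=
      Finset.dvd_prod_of_mem
        (f := fun p : Fin m × Fin m => (X p.1 - X p.2 : MvPolynomial (Fin m) ℂ))
        (a := (a, b)) (s := Finset.univ.filter (fun p : Fin m × Fin m => p.1 < p.2))
        (by simp [hab])
    obtain ⟨c, hc⟩ := hdvd
    have hmap : algebraMap (MvPolynomial (Fin m) ℂ) (RegFns m) (deltaPoly m)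
        = algebraMap (MvPolynomial (Fin m) ℂ) (RegFns m) (X a - X b)
          * algebraMap (MvPolynomial (Fin m) ℂ) (RegFns m) c := by
      rw [← map_mul, ← hc]
    rw [hmap] at hδ
    exact isUnit_of_mul_isUnit_left hδ
  rcases lt_or_gt_of_ne h with hlt | hgt
  · exact key hlt
  · have := (key hgt).neg
    rwa [← map_neg, neg_sub] at this

/-- Commutator with the inverse: if `[A, u] = c • 1` then
`[A, u⁻¹] = -(c • (u⁻¹ * u⁻¹))`. -/
lemma comm_inverse (A : Module.End ℂ M) (u : RegFns m) (hu : IsUnit u) (c : ℂ)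
    (h : A * mulOp m M u - mulOp m M u * A = c • (1 : Module.End ℂ M)) :
    A * mulOp m M (Ring.inverse u) - mulOp m M (Ring.inverse u) * A
      = -(c • mulOp m M (Ring.inverse u * Ring.inverse u)) := by
  set U := mulOp m M u with hU
  set V := mulOp m M (Ring.inverse u) with hV
  have hUV : U * V = 1 := by
    rw [hU, hV, ← mulOp_mul, Ring.mul_inverse_cancel _ hu, mulOp_one]
  have hVU : V * U = 1 := by
    rw [hU, hV, ← mulOp_mul, Ring.inverse_mul_cancel _ hu, mulOp_one]
  have h2 : V * (A * U - U * A) * V = V * (c • (1 : Module.End ℂ M)) * V := by rw [h]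
  have lhs : V * (A * U - U * A) * V = V * A - A * V := by
    rw [mul_sub, sub_mul]
    congr 1
    · calc V * (A * U) * V = V * A * (U * V) := by noncomm_ring
        _ = V * A := by rw [hUV, mul_one]
    · calc V * (U * A) * V = (V * U) * (A * V) := by noncomm_ring
        _ = A * V := by rw [hVU, one_mul]
  have rhs : V * (c • (1 : Module.End ℂ M)) * V = c • (V * V) := by
    rw [mul_smul_comm, mul_one, smul_mul_assoc]
  rw [lhs, rhs] at h2
  rw [mulOp_mul, ← hV, ← h2]
  abel

end Aux

/-- Modification of a good connection (Lemma 5.6): if the operators `q_i` satisfy the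
deformed Weyl relations `[q_i, q_j] = 0`, `[q_i, x_j] = t·δ_{ij}`, and are `S_m`-equivariant,
then so do the operators `q'_i = q_i + ∑_{j ≠ i} (x_i - x_j)⁻¹`; i.e. `ρ'` is again a
representation of `D ⋊ S_m` on `M`. -/
theorem modified_connection_is_good (m : ℕ) (hm : 2 ≤ m) (t : ℂ)
    (M : Type*) [AddCommGroup M] [Module ℂ M]
    [Module (RegFns m) M] [SMulCommClass ℂ (RegFns m) M]
    (π : Equiv.Perm (Fin m) →* (M ≃ₗ[ℂ] M))
    (q : Fin m → Module.End ℂ M)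
    -- notation: images of the variables and the functions `f_i = ∑_{j≠i} (x_i - x_j)⁻¹`
    (aX : Fin m → RegFns m) (haX : ∀ i, aX i = algebraMap (MvPolynomial (Fin m) ℂ) _ (X i))
    (inv : Fin m → Fin m → RegFns m)
    (hinv : ∀ i j, inv i j = Ring.inverse (algebraMap (MvPolynomial (Fin m) ℂ) _ (X i - X j)))
    (f : Fin m → RegFns m) (hf : ∀ i, f i = ∑ j ∈ Finset.univ.erase i, inv i j)
    -- `ρ` is a representation of `D ⋊ S_m` extending the module structure:
    (hqq : ∀ i j, q i * q j = q j * q i)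
    (hqx : ∀ i j, q i * mulOp m M (aX j) - mulOp m M (aX j) * q i
      = if i = j then t • (1 : Module.End ℂ M) else 0)
    (hπx : ∀ (w : Equiv.Perm (Fin m)) (i : Fin m) (v : M),
      π w (aX i • v) = aX (w i) • π w v)
    (hπinv : ∀ (w : Equiv.Perm (Fin m)) (i j : Fin m) (v : M),
      π w (inv i j • v) = inv (w i) (w j) • π w v)
    (hπq : ∀ (w : Equiv.Perm (Fin m)) (i : Fin m),
      (π w).toLinearMap * q i = q (w i) * (π w).toLinearMap) :
    -- then `ρ'`, with `q'_i = q_i + f_i`, is again such a representation: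
    let q' : Fin m → Module.End ℂ M := fun i => q i + mulOp m M (f i)
    (∀ i j, q' i * q' j = q' j * q' i) ∧
    (∀ i j, q' i * mulOp m M (aX j) - mulOp m M (aX j) * q' i
      = if i = j then t • (1 : Module.End ℂ M) else 0) ∧
    (∀ (w : Equiv.Perm (Fin m)) (i : Fin m),
      (π w).toLinearMap * q' i = q' (w i) * (π w).toLinearMap) := by
  intro q'
  -- commutator with `inv j k`:
  have hq_inv : ∀ i j k : Fin m, j ≠ k →
      q i * mulOp m M (inv j k) - mulOp m M (inv j k) * q i
        = -(((if i = j then t else 0) - (if i = k then t else 0)) •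
            mulOp m M (inv j k * inv j k)) := by
    intro i j k hjk
    set u : RegFns m := algebraMap (MvPolynomial (Fin m) ℂ) (RegFns m) (X j - X k) with hu
    have hmul : mulOp m M u = mulOp m M (aX j) - mulOp m M (aX k) := by
      rw [hu, map_sub, mulOp_sub, haX, haX]
    have hcu : q i * mulOp m M u - mulOp m M u * q i
        = ((if i = j then t else 0) - (if i = k then t else 0)) •
          (1 : Module.End ℂ M) := by
      rw [hmul]
      have expand : q i * (mulOp m M (aX j) - mulOp m M (aX k))
          - (mulOp m M (aX j) - mulOp m M (aX k)) * q i
          = (q i * mulOp m M (aX j) - mulOp m M (aX j) * q i)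
            - (q i * mulOp m M (aX k) - mulOp m M (aX k) * q i) := by noncomm_ring
      rw [expand, hqx, hqx, sub_smul]
      split_ifs <;> simp
    have := comm_inverse (q i) u (isUnit_sub_X hjk) _ hcu
    rw [hinv j k, ← hu]
    exact this
  -- commutator with `f j` for `i ≠ j`:
  have hq_f : ∀ i j : Fin m, i ≠ j →
      q i * mulOp m M (f j) - mulOp m M (f j) * q i
        = t • mulOp m M (inv j i * inv j i) := by
    intro i j hij
    rw [hf, mulOp_sum, Finset.mul_sum, Finset.sum_mul, ← Finset.sum_sub_distrib]
    have hterm : ∀ k ∈ Finset.univ.erase j,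
        q i * mulOp m M (inv j k) - mulOp m M (inv j k) * q i
          = (if k = i then t • mulOp m M (inv j k * inv j k) else 0) := by
      intro k hk
      have hjk : j ≠ k := (Finset.ne_of_mem_erase hk).symm
      rw [hq_inv i j k hjk, if_neg hij]
      by_cases h : k = i
      · subst h
        rw [if_pos rfl, if_pos rfl]
        simp
      · have h' : ¬ (i = k) := fun hc => h hc.symm
        rw [if_neg h', if_neg h]
        simp
    rw [Finset.sum_congr rfl hterm, Finset.sum_ite_eq' (Finset.univ.erase j) i]
    rw [if_pos (Finset.mem_erase.mpr ⟨hij, Finset.mem_univ i⟩)]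
  -- `inv j i * inv j i = inv i j * inv i j`:
  have hinv_sq : ∀ i j : Fin m, inv j i * inv j i = inv i j * inv i j := by
    intro i j
    have : inv j i = - inv i j := by
      rw [hinv, hinv, ← ring_inverse_neg, ← map_neg, neg_sub]
    rw [this]; ring
  -- equivariance of multiplication by `f i`:
  have hπf : ∀ (w : Equiv.Perm (Fin m)) (i : Fin m),
      (π w).toLinearMap * mulOp m M (f i) = mulOp m M (f (w i)) * (π w).toLinearMap := by
    intro w i
    apply LinearMap.ext; intro v
    simp only [Module.End.mul_apply, LinearEquiv.coe_coe, mulOp_apply]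
    rw [hf i, Finset.sum_smul, map_sum]
    have step : ∀ j ∈ Finset.univ.erase i,
        π w (inv i j • v) = inv (w i) (w j) • π w v := fun j _ => hπinv w i j v
    rw [Finset.sum_congr rfl step, ← Finset.sum_smul]
    congr 1
    rw [hf (w i)]
    refine Finset.sum_equiv (w : Fin m ≃ Fin m) (fun j => ?_) (fun j _ => rfl)
    simp [Finset.mem_erase, EmbeddingLike.apply_eq_iff_eq]
  refine ⟨?_, ?_, ?_⟩
  · -- [q'_i, q'_j] = 0
    intro i j
    rcases eq_or_ne i j with rfl | hij
    · rfl
    have expand : q' i * q' j - q' j * q' i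
        = (q i * q j - q j * q i)
          + ((q i * mulOp m M (f j) - mulOp m M (f j) * q i)
            - (q j * mulOp m M (f i) - mulOp m M (f i) * q j))
          + (mulOp m M (f i) * mulOp m M (f j) - mulOp m M (f j) * mulOp m M (f i)) := by
      simp only [q']; noncomm_ring
    have hzero : q' i * q' j - q' j * q' i = 0 := by
      rw [expand, hqq, hq_f i j hij, hq_f j i hij.symm, hinv_sq, mulOp_comm]
      simp
    exact sub_eq_zero.mp hzero
  · intro i j
    have expand : q' i * mulOp m M (aX j) - mulOp m M (aX j) * q' i
        = (q i * mulOp m M (aX j) - mulOp m M (aX j) * q i)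
          + (mulOp m M (f i) * mulOp m M (aX j) - mulOp m M (aX j) * mulOp m M (f i)) := by
      simp only [q']; noncomm_ring
    rw [expand, hqx, mulOp_comm, sub_self, add_zero]
  · intro w i
    simp only [q', mul_add, add_mul, hπq w i, hπf w i]
end

section
/- Let n = m, let V = C^n be the standard gl_n-module, let b_+ = t ⊕ n_+ be the Borel of upper triangular matrices, and for λ ∈ t* let C_λ be the one-dimensional b_+-module on which n_+ acts by zero and the diagonal e_kk acts by λ_k. If the coinvariant space H_0(b_+, (V*)^{⊗m} ⊗ C_λ) is nonzero, then λ is a partition of m with at most n parts (i.e., λ_1 ≥ λ_2 ≥ … ≥ λ_n ≥ 0 are integers summing to m). -/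
/-- The action of `X ∈ gl_n` on `(V*)^{⊗m}` with `m = n` (coordinates with respect to the
basis of pure tensors of dual basis vectors, indexed by functions `g : Fin n → Fin n`). -/
noncomputable def dualPowAct (n : ℕ) (X : Matrix (Fin n) (Fin n) ℂ) :
    ((Fin n → Fin n) → ℂ) →ₗ[ℂ] ((Fin n → Fin n) → ℂ) where
  toFun F := fun g => -∑ j : Fin n, ∑ i : Fin n, X i (g j) * F (Function.update g j i)
  map_add' F G := by
    funext g
    simp [mul_add, Finset.sum_add_distrib]; ring
  map_smul' c F := by
    funext g
    simp [Finset.mul_sum, mul_left_comm]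

open Finset

/-- auxiliary operator: replaces an occurrence of value `a` by `b` -/
noncomputable def Eop (n : ℕ) (a b : Fin n) (c : (Fin n → Fin n) → ℂ) :
    (Fin n → Fin n) → ℂ :=
  fun g => ∑ j : Fin n, if g j = a then c (Function.update g j b) else 0

/-- number of occurrences of value `a` in `g` -/
def cnt {n : ℕ} (g : Fin n → Fin n) (a : Fin n) : ℕ :=
  (Finset.univ.filter fun j => g j = a).card

lemma cnt_sum {n : ℕ} (g : Fin n → Fin n) : ∑ a, cnt g a = n := by
  classical
  have := Finset.card_eq_sum_card_fiberwise
    (f := g) (s := Finset.univ) (t := Finset.univ) (fun x _ => Finset.mem_univ _)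
  simpa [cnt, Finset.card_univ] using this.symm

lemma Eop_diag {n : ℕ} (a : Fin n) (c : (Fin n → Fin n) → ℂ) (g : Fin n → Fin n) :
    Eop n a a c g = (cnt g a : ℂ) * c g := by
  classical
  unfold Eop cnt
  rw [Finset.card_filter]
  push_cast
  rw [Finset.sum_mul]
  refine Finset.sum_congr rfl fun j _ => ?_
  by_cases h : g j = a
  · rw [if_pos h, if_pos h, ← h, Function.update_eq_self, one_mul]
  · simp [h]

lemma cnt_update_self {n : ℕ} {a b : Fin n} (hab : a ≠ b) (g : Fin n → Fin n) (j : Fin n)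
    (hj : g j = b) : cnt (Function.update g j a) a = cnt g a + 1 := by
  classical
  unfold cnt
  have : (Finset.univ.filter fun k => Function.update g j a k = a)
      = insert j (Finset.univ.filter fun k => g k = a) := by
    ext k
    by_cases hk : k = j
    · subst hk; simp
    · simp [hk, Function.update_of_ne hk]
  rw [this, Finset.card_insert_of_notMem]
  simp [hj, hab.symm]

lemma cnt_update_other {n : ℕ} {a b : Fin n} (hab : a ≠ b) (g : Fin n → Fin n) (j : Fin n)
    (hj : g j = b) : cnt g b = cnt (Function.update g j a) b + 1 := by
  classical
  unfold cnt
  have : (Finset.univ.filter fun k => Function.update g j a k = b)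
      = (Finset.univ.filter fun k => g k = b).erase j := by
    ext k
    by_cases hk : k = j
    · subst hk; simp [hab]
    · simp [hk, Function.update_of_ne hk]
  rw [this, Finset.card_erase_of_mem (by simp [hj])]
  have : 0 < (Finset.univ.filter fun k => g k = b).card :=
    Finset.card_pos.mpr ⟨j, by simp [hj]⟩
  omega

lemma cnt_mul {n : ℕ} (a : Fin n) (g : Fin n → Fin n) (x : ℂ) :
    (cnt g a : ℂ) * x = ∑ j : Fin n, if g j = a then x else 0 := by
  classical
  unfold cnt
  rw [Finset.card_filter]
  push_cast
  rw [Finset.sum_mul]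
  exact Finset.sum_congr rfl fun j _ => by by_cases h : g j = a <;> simp [h]

lemma Eop_Eop {n : ℕ} {a b : Fin n} (hab : a ≠ b) (c : (Fin n → Fin n) → ℂ)
    (g : Fin n → Fin n) :
    Eop n a b (Eop n b a c) g
      = (cnt g a : ℂ) * c g
        + ∑ j : Fin n, ∑ k : Fin n,
            if g j = a ∧ g k = b then
              c (Function.update (Function.update g j b) k a) else 0 := by
  classical
  rw [cnt_mul, ← Finset.sum_add_distrib]
  unfold Eop
  refine Finset.sum_congr rfl fun j _ => ?_
  by_cases h : g j = a
  · rw [if_pos h]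
    rw [← Finset.add_sum_erase _ _ (Finset.mem_univ j),
        ← Finset.add_sum_erase _ _ (Finset.mem_univ j)]
    have h1 : Function.update g j b j = b := Function.update_self _ _ _
    rw [if_pos h1, Function.update_idem]
    have h2 : Function.update g j a = g := by rw [← h]; exact Function.update_eq_self _ _
    rw [h2]
    have h3 : (if g j = a ∧ g j = b then c g else 0) = 0 := by
      rw [if_neg]; rintro ⟨_, hb⟩; exact hab (h ▸ hb)
    rw [h3, zero_add, if_pos h]
    congr 1
    refine Finset.sum_congr rfl fun k hk => ?_
    have hkj : k ≠ j := Finset.ne_of_mem_erase hk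
    rw [Function.update_of_ne hkj]
    simp [h]
  · simp [h]

lemma Eop_comm {n : ℕ} {a b : Fin n} (hab : a ≠ b) (c : (Fin n → Fin n) → ℂ)
    (g : Fin n → Fin n) :
    Eop n a b (Eop n b a c) g
      = Eop n b a (Eop n a b c) g + ((cnt g a : ℂ) - cnt g b) * c g := by
  classical
  rw [Eop_Eop hab, Eop_Eop hab.symm]
  have : (∑ j : Fin n, ∑ k : Fin n,
      if g j = a ∧ g k = b then
        c (Function.update (Function.update g j b) k a) else 0)
      = ∑ j : Fin n, ∑ k : Fin n,
          if g j = b ∧ g k = a then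
            c (Function.update (Function.update g j a) k b) else 0 := by
    rw [Finset.sum_comm]
    refine Finset.sum_congr rfl fun k _ => Finset.sum_congr rfl fun j _ => ?_
    by_cases hc : g j = a ∧ g k = b
    · rw [if_pos hc, if_pos ⟨hc.2, hc.1⟩]
      have hjk : j ≠ k := fun h => hab (hc.1 ▸ h ▸ hc.2)
      rw [Function.update_comm hjk]
    · rw [if_neg hc, if_neg (fun h => hc ⟨h.2, h.1⟩)]
  rw [this]
  ring

lemma Eop_smul {n : ℕ} (x y : Fin n) (α : ℂ) (d : (Fin n → Fin n) → ℂ) (g : Fin n → Fin n) :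
    Eop n x y (fun h => α * d h) g = α * Eop n x y d g := by
  classical
  simp only [Eop, Finset.mul_sum]
  exact Finset.sum_congr rfl fun j _ => by by_cases h : g j = x <;> simp [h]

lemma Eop_zero {n : ℕ} (x y : Fin n) (g : Fin n → Fin n) :
    Eop n x y (fun _ => 0) g = 0 := by
  classical
  simp [Eop]

lemma sl2_H {n : ℕ} {a b : Fin n} (hab : a ≠ b) (c : (Fin n → Fin n) → ℂ) (μ : Fin n → ℕ)
    (hsupp : ∀ g, c g ≠ 0 → ∀ x, cnt g x = μ x) :
    ∀ k : ℕ, ∀ g, ((cnt g a : ℂ) - cnt g b) * ((Eop n b a)^[k] c) g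
      = ((μ a : ℂ) - μ b - 2 * k) * ((Eop n b a)^[k] c) g := by
  classical
  intro k
  induction k with
  | zero =>
    intro g
    simp only [Function.iterate_zero, id_eq, Nat.cast_zero]
    by_cases h : c g = 0
    · simp [h]
    · rw [hsupp g h a, hsupp g h b]; ring
  | succ k ih =>
    intro g
    rw [Function.iterate_succ_apply']
    simp only [Eop, Finset.mul_sum]
    refine Finset.sum_congr rfl fun j _ => ?_
    by_cases hj : g j = b
    · rw [if_pos hj]
      have e1 := cnt_update_self hab g j hj
      have e2 := cnt_update_other hab g j hj
      have c1 : ((cnt (Function.update g j a) a : ℕ) : ℂ) = (cnt g a : ℂ) + 1 := by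
        exact_mod_cast congrArg (fun t : ℕ => (t : ℂ)) e1
      have c2 : ((cnt g b : ℕ) : ℂ) = (cnt (Function.update g j a) b : ℂ) + 1 := by
        exact_mod_cast congrArg (fun t : ℕ => (t : ℂ)) e2
      have ih' := ih (Function.update g j a)
      push_cast
      push_cast at ih'
      linear_combination ih' - ((Eop n b a)^[k] c) (Function.update g j a) * c1
        - ((Eop n b a)^[k] c) (Function.update g j a) * c2
    · simp [hj]

lemma sl2_supp {n : ℕ} {a b : Fin n} (hab : a ≠ b) (c : (Fin n → Fin n) → ℂ) (μ : Fin n → ℕ)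
    (hsupp : ∀ g, c g ≠ 0 → ∀ x, cnt g x = μ x) :
    ∀ k : ℕ, ∀ g, ((Eop n b a)^[k] c) g ≠ 0 → cnt g a + k = μ a := by
  classical
  intro k
  induction k with
  | zero => intro g h; simpa using hsupp g (by simpa using h) a
  | succ k ih =>
    intro g h
    rw [Function.iterate_succ_apply'] at h
    simp only [Eop] at h
    obtain ⟨j, -, hj⟩ := Finset.exists_ne_zero_of_sum_ne_zero h
    by_cases hjb : g j = b
    · rw [if_pos hjb] at hj
      have := ih (Function.update g j a) hj
      have e1 := cnt_update_self hab g j hjb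
      omega
    · rw [if_neg hjb] at hj; exact absurd rfl hj

lemma sl2_E {n : ℕ} {a b : Fin n} (hab : a ≠ b) (c : (Fin n → Fin n) → ℂ) (μ : Fin n → ℕ)
    (hsupp : ∀ g, c g ≠ 0 → ∀ x, cnt g x = μ x)
    (hE : ∀ g, Eop n a b c g = 0) :
    ∀ k : ℕ, ∀ g, Eop n a b ((Eop n b a)^[k + 1] c) g
      = ((k : ℂ) + 1) * ((μ a : ℂ) - μ b - k) * ((Eop n b a)^[k] c) g := by
  classical
  intro k
  induction k with
  | zero =>
    intro g
    rw [Function.iterate_succ_apply', Function.iterate_zero, id_eq]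
    rw [Eop_comm hab c g]
    have hEc : Eop n a b c = fun _ => 0 := funext hE
    rw [hEc, Eop_zero]
    have := sl2_H hab c μ hsupp 0 g
    simp only [Function.iterate_zero, id_eq, Nat.cast_zero] at this
    rw [zero_add, this]
    ring
  | succ k ih =>
    intro g
    rw [Function.iterate_succ_apply' (f := Eop n b a) (n := k + 1)]
    rw [Eop_comm hab ((Eop n b a)^[k + 1] c) g]
    have hih : Eop n a b ((Eop n b a)^[k + 1] c)
        = fun h => ((k : ℂ) + 1) * (((μ a : ℂ) - μ b - k) * ((Eop n b a)^[k] c) h) := by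
      funext h; rw [ih h]; ring
    rw [hih, Eop_smul]
    have hsm : Eop n b a (fun h => ((μ a : ℂ) - μ b - k) * ((Eop n b a)^[k] c) h) g
        = ((μ a : ℂ) - μ b - k) * Eop n b a ((Eop n b a)^[k] c) g := Eop_smul _ _ _ _ _
    rw [hsm, ← Function.iterate_succ_apply' (f := Eop n b a) (n := k)]
    have hH := sl2_H hab c μ hsupp (k + 1) g
    rw [hH]
    push_cast
    ring

lemma sl2_main {n : ℕ} {a b : Fin n} (hab : a ≠ b) (c : (Fin n → Fin n) → ℂ) (μ : Fin n → ℕ)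
    (hc : c ≠ 0)
    (hsupp : ∀ g, c g ≠ 0 → ∀ x, cnt g x = μ x)
    (hE : ∀ g, Eop n a b c g = 0) :
    μ b ≤ μ a := by
  classical
  have hvan : ∃ k : ℕ, (Eop n b a)^[k] c = fun _ => 0 := by
    refine ⟨μ a + 1, funext fun g => ?_⟩
    by_contra h
    have := sl2_supp hab c μ hsupp (μ a + 1) g h
    omega
  let N := Nat.find hvan
  have hN : (Eop n b a)^[N] c = fun _ => 0 := Nat.find_spec hvan
  have hN0 : N ≠ 0 := by
    intro h0
    rw [h0, Function.iterate_zero, id_eq] at hN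
    exact hc (by funext g; exact congrFun hN g)
  obtain ⟨M, hM⟩ : ∃ M, N = M + 1 := ⟨N - 1, by omega⟩
  have hMne : (Eop n b a)^[M] c ≠ fun _ => 0 := Nat.find_min hvan (by omega)
  obtain ⟨g, hg⟩ : ∃ g, ((Eop n b a)^[M] c) g ≠ 0 := by
    by_contra h
    push_neg at h
    exact hMne (funext h)
  have hEe := sl2_E hab c μ hsupp hE M g
  rw [← hM, hN, Eop_zero] at hEe
  have hfac : ((M : ℂ) + 1) * ((μ a : ℂ) - μ b - M) = 0 := by
    rcases mul_eq_zero.mp hEe.symm with h | h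
    · exact h
    · exact absurd h hg
  have hM1 : ((M : ℂ) + 1) ≠ 0 := by
    exact_mod_cast Nat.cast_add_one_ne_zero (R := ℂ) M
  have hr : (μ a : ℂ) = (μ b : ℂ) + M := by
    have := (mul_eq_zero.mp hfac).resolve_left hM1
    linear_combination this
  have : μ a = μ b + M := by exact_mod_cast hr
  omega

lemma cond_iff {n : ℕ} (a b : Fin n) (g h : Fin n → Fin n) (j : Fin n) :
    (h j = b ∧ Function.update h j a = g) ↔ (g j = a ∧ h = Function.update g j b) := by
  constructor
  · rintro ⟨hb, rfl⟩
    refine ⟨Function.update_self _ _ _, ?_⟩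
    funext k
    by_cases hk : k = j
    · subst hk; simp [hb]
    · simp [Function.update_of_ne hk]
  · rintro ⟨hg, rfl⟩
    refine ⟨Function.update_self _ _ _, ?_⟩
    rw [Function.update_idem, ← hg, Function.update_eq_self]

lemma extract (n : ℕ) (lam : Fin n → ℂ)
    (hne : Submodule.span ℂ
        { F : (Fin n → Fin n) → ℂ |
          ∃ X : Matrix (Fin n) (Fin n) ℂ,
            (∀ i j : Fin n, j < i → X i j = 0) ∧
            ∃ G : (Fin n → Fin n) → ℂ,
              F = dualPowAct n X G + (∑ k, lam k * X k k) • G } ≠ ⊤) :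
    ∃ c : (Fin n → Fin n) → ℂ, c ≠ 0 ∧
      ∀ a b : Fin n, a ≤ b → ∀ g, Eop n a b c g = (if a = b then lam a else 0) * c g := by
  classical
  set S := { F : (Fin n → Fin n) → ℂ |
          ∃ X : Matrix (Fin n) (Fin n) ℂ,
            (∀ i j : Fin n, j < i → X i j = 0) ∧
            ∃ G : (Fin n → Fin n) → ℂ,
              F = dualPowAct n X G + (∑ k, lam k * X k k) • G } with hS
  set sp := Submodule.span ℂ S with hsp
  obtain ⟨v, hv⟩ : ∃ v, v ∉ sp := by
    by_contra h
    push_neg at h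
    exact hne (Submodule.eq_top_iff'.mpr h)
  have hqv : Submodule.mkQ sp v ≠ 0 := by
    rw [Submodule.mkQ_apply, Ne, Submodule.Quotient.mk_eq_zero]
    exact hv
  obtain ⟨ψ, hψ⟩ : ∃ ψ : Module.Dual ℂ (((Fin n → Fin n) → ℂ) ⧸ sp),
      ψ (Submodule.mkQ sp v) ≠ 0 := by
    by_contra h
    push_neg at h
    exact hqv ((Module.forall_dual_apply_eq_zero_iff ℂ _).mp h)
  set φ : ((Fin n → Fin n) → ℂ) →ₗ[ℂ] ℂ := ψ.comp (Submodule.mkQ sp) with hφ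
  have hker : ∀ F ∈ sp, φ F = 0 := by
    intro F hF
    have : Submodule.mkQ sp F = 0 := by
      rw [Submodule.mkQ_apply, Submodule.Quotient.mk_eq_zero]; exact hF
    simp [hφ, this]
  set c : (Fin n → Fin n) → ℂ := fun h => φ (Pi.single h 1) with hc
  have hexp : ∀ F : (Fin n → Fin n) → ℂ, φ F = ∑ h, F h * c h := by
    intro F
    conv_lhs => rw [← Finset.univ_sum_single F]
    rw [map_sum]
    refine Finset.sum_congr rfl fun h _ => ?_
    have h1 : Pi.single h (F h) = F h • (Pi.single h 1 : (Fin n → Fin n) → ℂ) := by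
      rw [← Pi.single_smul, smul_eq_mul, mul_one]
    rw [h1, map_smul, smul_eq_mul]
  have hcne : c ≠ 0 := by
    intro h0
    apply hψ
    have : φ v = 0 := by
      rw [hexp v]
      simp [h0]
    simpa [hφ] using this
  refine ⟨c, hcne, ?_⟩
  intro a b hab g
  set X : Matrix (Fin n) (Fin n) ℂ := Matrix.single a b 1 with hX
  have htri : ∀ i j : Fin n, j < i → X i j = 0 := by
    intro i j hij
    rw [hX, Matrix.single]
    simp only [Matrix.of_apply]
    rw [if_neg]
    rintro ⟨rfl, rfl⟩
    exact absurd hab (not_le.mpr hij)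
  have hmem : dualPowAct n X (Pi.single g 1) + (∑ k, lam k * X k k) • (Pi.single g 1 : (Fin n → Fin n) → ℂ) ∈ sp :=
    Submodule.subset_span ⟨X, htri, (Pi.single g 1 : (Fin n → Fin n) → ℂ), rfl⟩
  have h0 : φ (dualPowAct n X (Pi.single g 1)) + (∑ k, lam k * X k k) * c g = 0 := by
    have := hker _ hmem
    rwa [map_add, map_smul, smul_eq_mul] at this
  have hA : (∑ k, lam k * X k k) = if a = b then lam a else 0 := by
    by_cases h : a = b
    · subst h
      rw [if_pos rfl]
      have : ∀ k, lam k * X k k = if k = a then lam a else 0 := by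
        intro k
        rw [hX, Matrix.single]
        simp only [Matrix.of_apply]
        by_cases hk : k = a
        · rw [hk]; simp
        · rw [if_neg (fun hc : a = k ∧ a = k => hk hc.1.symm), mul_zero, if_neg hk]
      rw [Finset.sum_congr rfl fun k _ => this k, Finset.sum_ite_eq' Finset.univ a fun _ => lam a]
      simp
    · rw [if_neg h]
      refine Finset.sum_eq_zero fun k _ => ?_
      rw [hX, Matrix.single]
      simp only [Matrix.of_apply]
      rw [if_neg, mul_zero]
      rintro ⟨rfl, rfl⟩
      exact h rfl
  have hdPA : ∀ h : Fin n → Fin n, (dualPowAct n X (Pi.single g 1)) h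
      = -∑ j : Fin n, if h j = b ∧ Function.update h j a = g then 1 else 0 := by
    intro h
    show -∑ j : Fin n, ∑ i : Fin n,
        X i (h j) * (Pi.single g 1 : (Fin n → Fin n) → ℂ) (Function.update h j i) = _
    congr 1
    refine Finset.sum_congr rfl fun j _ => ?_
    have hterm : ∀ i, X i (h j) * (Pi.single g 1 : (Fin n → Fin n) → ℂ) (Function.update h j i)
        = if i = a ∧ (h j = b ∧ Function.update h j a = g) then 1 else 0 := by
      intro i
      rw [hX, Matrix.single]
      simp only [Matrix.of_apply, Pi.single_apply]
      by_cases hia : i = a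
      · rw [hia]
        by_cases hb : h j = b
        · by_cases hu : Function.update h j a = g
          · have t1 : a = a ∧ b = h j := ⟨rfl, hb.symm⟩
            have t2 : a = a ∧ (h j = b ∧ Function.update h j a = g) := ⟨rfl, hb, hu⟩
            rw [if_pos t1, if_pos t2, if_pos hu, one_mul]
          · have t1 : a = a ∧ b = h j := ⟨rfl, hb.symm⟩
            have t2 : ¬(a = a ∧ (h j = b ∧ Function.update h j a = g)) :=
              fun hc => hu hc.2.2
            rw [if_pos t1, one_mul, if_neg hu, if_neg t2]
        · rw [if_neg (fun hc : a = a ∧ b = h j => hb hc.2.symm), zero_mul,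
             if_neg (fun hc => hb hc.2.1)]
      · rw [if_neg (fun hc : a = i ∧ b = h j => hia hc.1.symm), zero_mul,
           if_neg (fun hc => hia hc.1)]
    rw [Finset.sum_congr rfl fun i _ => hterm i]
    by_cases hcnd : h j = b ∧ Function.update h j a = g
    · rw [if_pos hcnd]
      have : ∀ i : Fin n, (if i = a ∧ (h j = b ∧ Function.update h j a = g) then (1:ℂ) else 0)
          = if i = a then 1 else 0 := fun i => by
        by_cases hia : i = a <;> simp [hia, hcnd]
      rw [Finset.sum_congr rfl fun i _ => this i, Finset.sum_ite_eq' Finset.univ a fun _ => (1:ℂ)]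
      simp
    · rw [if_neg hcnd]
      refine Finset.sum_eq_zero fun i _ => ?_
      rw [if_neg]
      rintro ⟨-, hc2⟩
      exact hcnd hc2
  have hφd : φ (dualPowAct n X (Pi.single g 1)) = -Eop n a b c g := by
    rw [hexp]
    have : ∀ h : Fin n → Fin n, (dualPowAct n X (Pi.single g 1)) h * c h
        = -∑ j : Fin n, if g j = a ∧ h = Function.update g j b then c h else 0 := by
      intro h
      rw [hdPA h, neg_mul, Finset.sum_mul]
      congr 1
      refine Finset.sum_congr rfl fun j _ => ?_
      by_cases hcnd : h j = b ∧ Function.update h j a = g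
      · rw [if_pos hcnd, if_pos ((cond_iff a b g h j).mp hcnd), one_mul]
      · rw [if_neg hcnd, if_neg (fun hc => hcnd ((cond_iff a b g h j).mpr hc)), zero_mul]
    calc (∑ h, (dualPowAct n X (Pi.single g 1)) h * c h)
        = ∑ h : Fin n → Fin n, -∑ j : Fin n,
            (if g j = a ∧ h = Function.update g j b then c h else 0) :=
          Finset.sum_congr rfl fun h _ => this h
      _ = -∑ h : Fin n → Fin n, ∑ j : Fin n,
            (if g j = a ∧ h = Function.update g j b then c h else 0) := by
          rw [Finset.sum_neg_distrib]
      _ = -∑ j : Fin n, ∑ h : Fin n → Fin n,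
            (if g j = a ∧ h = Function.update g j b then c h else 0) := by
          rw [Finset.sum_comm]
      _ = -∑ j : Fin n, (if g j = a then c (Function.update g j b) else 0) := by
          congr 1
          refine Finset.sum_congr rfl fun j _ => ?_
          by_cases hgj : g j = a
          · rw [if_pos hgj]
            have h2 : ∀ h : Fin n → Fin n,
                (if g j = a ∧ h = Function.update g j b then c h else 0)
                  = if h = Function.update g j b then c h else 0 := fun h => by
              by_cases hh : h = Function.update g j b
              · rw [if_pos ⟨hgj, hh⟩, if_pos hh]
              · rw [if_neg (fun hc => hh hc.2), if_neg hh]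
            rw [Finset.sum_congr rfl fun h _ => h2 h,
               Finset.sum_ite_eq' Finset.univ (Function.update g j b) c]
            simp
          · rw [if_neg hgj]
            exact Finset.sum_eq_zero fun h _ => if_neg (fun hc => hgj hc.1)
      _ = -Eop n a b c g := rfl
  rw [hA, hφd] at h0
  linear_combination -h0

/-- With `n = m`, if the coinvariant space `H_0(b_+, (V*)^{⊗m} ⊗ C_λ)` is nonzero — i.e. the
span of the images of the twisted actions `X ↦ (X acting on (V*)^{⊗m}) + λ(X)·id` of the
upper triangular matrices `X` is not the whole space — then `λ` is a partition of `m` with at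
most `n` parts: a weakly decreasing sequence of non-negative integers summing to `n`. -/
theorem borel_coinvariants_nonzero_implies_partition
    (n : ℕ) (lam : Fin n → ℂ)
    (hne : Submodule.span ℂ
        { F : (Fin n → Fin n) → ℂ |
          ∃ X : Matrix (Fin n) (Fin n) ℂ,
            (∀ i j : Fin n, j < i → X i j = 0) ∧
            ∃ G : (Fin n → Fin n) → ℂ,
              F = dualPowAct n X G + (∑ k, lam k * X k k) • G } ≠ ⊤) :
    ∃ μ : Fin n → ℕ, (∀ k, lam k = (μ k : ℂ)) ∧ Antitone μ ∧ ∑ k, μ k = n := by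
  classical
  obtain ⟨c, hcne, hcond⟩ := extract n lam hne
  obtain ⟨g0, hg0⟩ : ∃ g0, c g0 ≠ 0 := by
    by_contra h
    push_neg at h
    exact hcne (funext h)
  set μ : Fin n → ℕ := fun k => cnt g0 k with hμ
  have hlam : ∀ k, lam k = (μ k : ℂ) := by
    intro k
    have h1 := hcond k k le_rfl g0
    rw [Eop_diag, if_pos rfl] at h1
    exact (mul_right_cancel₀ hg0 h1).symm
  have hsupp : ∀ g, c g ≠ 0 → ∀ x, cnt g x = μ x := by
    intro g hg x
    have h1 := hcond x x le_rfl g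
    rw [Eop_diag, if_pos rfl] at h1
    have h2 : (cnt g x : ℂ) = lam x := mul_right_cancel₀ hg h1
    rw [hlam x] at h2
    exact_mod_cast h2
  refine ⟨μ, hlam, ?_, cnt_sum g0⟩
  intro a b hab
  rcases eq_or_lt_of_le hab with h | h
  · rw [h]
  · refine sl2_main (ne_of_lt h) c μ hcne hsupp fun g => ?_
    have h1 := hcond a b (le_of_lt h) g
    rwa [if_neg (ne_of_lt h), zero_mul] at h1
end
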